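/- arXiv:2504.20576 — 3 statements merged into one kernel-verified Lean document; each statement's English description precedes it below -/
import Mathlib

section
/- Let ε > 0, let Ψ : ℝ×ℝ³ → ℂ and φ : ℝ×ℝ³ → ℝ be smooth, and suppose there is a compact set K ⊆ ℝ³ such that Ψ(T,x) = 0 and φ(T,x) = 0 whenever x ∉ K. If (Ψ, φ) solves the Schrödinger-Wave system i∂_TΨ = −(1/2)ΔΨ + φΨ and ε∂_T²φ = Δφ − |Ψ|² at every point, then the energy T ↦ ∫_{ℝ³} [ |∇Ψ|²/2 + φ|Ψ|² + |∇φ|²/2 + (ε/2)(∂_Tφ)² ] dx is constant on ℝ. -/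
noncomputable section

open MeasureTheory

variable {E : Type*} [NormedAddCommGroup E] [NormedSpace ℝ E]

/-- Time derivative of a function of (time, space). -/
def dTime (f : ℝ × (Fin 3 → ℝ) → E) (p : ℝ × (Fin 3 → ℝ)) : E :=
  deriv (fun s => f (s, p.2)) p.1

/-- Partial derivative in the i-th space variable. -/
def dSpace (i : Fin 3) (f : ℝ × (Fin 3 → ℝ) → E) (p : ℝ × (Fin 3 → ℝ)) : E :=
  deriv (fun y => f (p.1, Function.update p.2 i y)) (p.2 i)

/-- Spatial Laplacian. -/
def lapl (f : ℝ × (Fin 3 → ℝ) → E) (p : ℝ × (Fin 3 → ℝ)) : E :=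
  ∑ i : Fin 3, dSpace i (dSpace i f) p

namespace SWAux

lemma contDiff_incl (T : ℝ) : ContDiff ℝ (⊤ : ℕ∞) (fun x : Fin 3 → ℝ => (T, x)) :=
  contDiff_const.prodMk contDiff_id

lemma contDiff_inclT (x : Fin 3 → ℝ) : ContDiff ℝ (⊤ : ℕ∞) (fun s : ℝ => (s, x)) :=
  contDiff_id.prodMk contDiff_const

variable {f : ℝ × (Fin 3 → ℝ) → E} {K : Set (Fin 3 → ℝ)}

lemma sliceCD (hf : ContDiff ℝ (⊤ : ℕ∞) f) (T : ℝ) : ContDiff ℝ (⊤ : ℕ∞) (fun x : Fin 3 → ℝ => f (T, x)) :=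
  hf.comp (contDiff_incl T)

lemma hasDerivAt_time (hf : ContDiff ℝ (⊤ : ℕ∞) f) (T : ℝ) (x : Fin 3 → ℝ) :
    HasDerivAt (fun s => f (s, x)) (dTime f (T, x)) T := by
  have h : DifferentiableAt ℝ (fun s => f (s, x)) T :=
    ((hf.differentiable (by simp)).comp ((contDiff_inclT x).differentiable (by simp))).differentiableAt
  simpa [dTime] using h.hasDerivAt

/-- The spatial partial derivative as fderiv of the time-slice. -/
lemma dSpace_eq_slice (hf : ContDiff ℝ (⊤ : ℕ∞) f) (i : Fin 3) (T : ℝ) (x : Fin 3 → ℝ) :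
    dSpace i f (T, x) = fderiv ℝ (fun y : Fin 3 → ℝ => f (T, y)) x (Pi.single i 1) := by
  have hg : DifferentiableAt ℝ (fun y : Fin 3 → ℝ => f (T, y)) x :=
    ((hf.differentiable (by simp)).comp ((contDiff_incl T).differentiable (by simp))).differentiableAt
  have h1 : HasDerivAt (fun y => f (T, Function.update x i y))
      (fderiv ℝ (fun y : Fin 3 → ℝ => f (T, y)) x (Pi.single i 1)) (x i) := by
    have h0 : HasDerivAt (Function.update x i) (Pi.single i (1:ℝ)) (x i) :=
      hasDerivAt_update x i (x i)
    have hg' : HasFDerivAt (fun y : Fin 3 → ℝ => f (T, y))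
        (fderiv ℝ (fun y : Fin 3 → ℝ => f (T, y)) x) (Function.update x i (x i)) := by
      rw [Function.update_eq_self]; exact hg.hasFDerivAt
    simpa [Function.comp_def] using hg'.comp_hasDerivAt (x i) h0
  simpa [dSpace] using h1.deriv

lemma dTime_eq_fderiv (hf : ContDiff ℝ (⊤ : ℕ∞) f) (p : ℝ × (Fin 3 → ℝ)) :
    dTime f p = fderiv ℝ f p (1, 0) := by
  have h0 : HasDerivAt (fun s : ℝ => (s, p.2)) ((1:ℝ), (0 : Fin 3 → ℝ)) p.1 := by
    simpa using (hasDerivAt_id p.1).prodMk (hasDerivAt_const p.1 p.2)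
  have := (hf.differentiable (by simp) p).hasFDerivAt.comp_hasDerivAt p.1 h0
  simpa [dTime, Function.comp_def] using this.deriv

lemma dSpace_eq_fderiv (hf : ContDiff ℝ (⊤ : ℕ∞) f) (i : Fin 3) (p : ℝ × (Fin 3 → ℝ)) :
    dSpace i f p = fderiv ℝ f p (0, Pi.single i 1) := by
  have h0 : HasDerivAt (fun y : ℝ => ((p.1, Function.update p.2 i y) : ℝ × (Fin 3 → ℝ)))
      ((0:ℝ), Pi.single i (1:ℝ)) (p.2 i) := by
    simpa using (hasDerivAt_const (p.2 i) p.1).prodMk (hasDerivAt_update p.2 i (p.2 i))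
  have hf' : HasFDerivAt f (fderiv ℝ f p) (p.1, Function.update p.2 i (p.2 i)) := by
    rw [Function.update_eq_self]; exact (hf.differentiable (by simp) p).hasFDerivAt
  simpa [dSpace, Function.comp_def] using (hf'.comp_hasDerivAt (p.2 i) h0).deriv

lemma contDiff_D (hf : ContDiff ℝ (⊤ : ℕ∞) f) (v : ℝ × (Fin 3 → ℝ)) :
    ContDiff ℝ (⊤ : ℕ∞) (fun p => fderiv ℝ f p v) :=
  (hf.fderiv_right (by simp)).clm_apply contDiff_const

lemma contDiff_dTime (hf : ContDiff ℝ (⊤ : ℕ∞) f) : ContDiff ℝ (⊤ : ℕ∞) (dTime f) := by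
  have : dTime f = fun p => fderiv ℝ f p (1, 0) := funext (dTime_eq_fderiv hf)
  rw [this]; exact contDiff_D hf _

lemma contDiff_dSpace (hf : ContDiff ℝ (⊤ : ℕ∞) f) (i : Fin 3) : ContDiff ℝ (⊤ : ℕ∞) (dSpace i f) := by
  have : dSpace i f = fun p => fderiv ℝ f p (0, Pi.single i 1) := funext (dSpace_eq_fderiv hf i)
  rw [this]; exact contDiff_D hf _

lemma fderiv_D_symm (hf : ContDiff ℝ (⊤ : ℕ∞) f) (p v w : ℝ × (Fin 3 → ℝ)) :
    fderiv ℝ (fun q => fderiv ℝ f q v) p w = fderiv ℝ (fun q => fderiv ℝ f q w) p v := by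
  have hd : Differentiable ℝ (fderiv ℝ f) :=
    (hf.fderiv_right (m := (⊤ : ℕ∞)) (by simp)).differentiable (by simp)
  have hsym := second_derivative_symmetric (f := f) (f' := fderiv ℝ f)
    (f'' := fderiv ℝ (fderiv ℝ f) p)
    (fun y => (hf.differentiable (by simp) y).hasFDerivAt) (hd p).hasFDerivAt
  have e1 : ∀ u : ℝ × (Fin 3 → ℝ), fderiv ℝ (fun q => fderiv ℝ f q u) p
      = (fderiv ℝ (fderiv ℝ f) p).flip u := by
    intro u
    have := fderiv_clm_apply (𝕜 := ℝ) (c := fderiv ℝ f) (u := fun _ => u)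
      (hd p) (differentiableAt_const u)
    have hc : fderiv ℝ (fun _ : ℝ × (Fin 3 → ℝ) => u) p = 0 := fderiv_const_apply u
    rw [this, hc]; simp
  rw [e1 v, e1 w]
  simpa using hsym w v

lemma dTime_dSpace_comm (hf : ContDiff ℝ (⊤ : ℕ∞) f) (i : Fin 3) (p : ℝ × (Fin 3 → ℝ)) :
    dTime (dSpace i f) p = dSpace i (dTime f) p := by
  rw [dTime_eq_fderiv (contDiff_dSpace hf i), dSpace_eq_fderiv (contDiff_dTime hf) i]
  have h1 : dSpace i f = fun q => fderiv ℝ f q (0, Pi.single i 1) := funext (dSpace_eq_fderiv hf i)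
  have h2 : dTime f = fun q => fderiv ℝ f q (1, 0) := funext (dTime_eq_fderiv hf)
  rw [h1, h2]
  exact fderiv_D_symm hf p _ _

lemma supp_dTime (hs : ∀ T x, x ∉ K → f (T, x) = 0) :
    ∀ T x, x ∉ K → dTime f (T, x) = 0 := by
  intro T x hx
  have : (fun s => f (s, x)) = fun _ => (0 : E) := funext fun s => hs s x hx
  simp [dTime, this]

lemma supp_dSpace (hK : IsCompact K) (hs : ∀ T x, x ∉ K → f (T, x) = 0) (i : Fin 3) :
    ∀ T x, x ∉ K → dSpace i f (T, x) = 0 := by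
  intro T x hx
  have hopen : IsOpen Kᶜ := hK.isClosed.isOpen_compl
  have hcont : ContinuousAt (Function.update x i) (x i) :=
    (hasDerivAt_update x i (x i)).continuousAt
  have hmem : Kᶜ ∈ nhds (Function.update x i (x i)) := by
    rw [Function.update_eq_self]; exact hopen.mem_nhds hx
  have hev : ∀ᶠ y in nhds (x i), f (T, Function.update x i y) = 0 := by
    filter_upwards [hcont.preimage_mem_nhds hmem] with y hy
    exact hs T _ hy
  have : deriv (fun y => f (T, Function.update x i y)) (x i)
      = deriv (fun _ : ℝ => (0 : E)) (x i) := Filter.EventuallyEq.deriv_eq hev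
  simpa [dSpace] using this

lemma supp_fderiv_slice {v : (Fin 3 → ℝ) → E} (hK : IsCompact K)
    (hs : ∀ x, x ∉ K → v x = 0) : ∀ x, x ∉ K → fderiv ℝ v x = 0 := by
  intro x hx
  have hev : v =ᶠ[nhds x] (fun _ => 0) := by
    filter_upwards [hK.isClosed.isOpen_compl.mem_nhds hx] with y hy
    exact hs y hy
  rw [hev.fderiv_eq, fderiv_fun_const]; rfl

lemma integrableK {v : (Fin 3 → ℝ) → E}
    (hK : IsCompact K) (hv : Continuous v) (hs : ∀ x ∉ K, v x = 0) : Integrable v :=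
  hv.integrable_of_hasCompactSupport (HasCompactSupport.intro hK hs)

/-- The real bilinear form `(z, w) ↦ z.re * w.re + z.im * w.im` on `ℂ`. -/
def Bre : ℂ →L[ℝ] ℂ →L[ℝ] ℝ :=
  LinearMap.mkContinuous₂
    (LinearMap.mk₂ ℝ (fun z w => z.re * w.re + z.im * w.im)
      (fun z z' w => by simp; ring) (fun c z w => by simp; ring)
      (fun z w w' => by simp; ring) (fun c z w => by simp; ring))
    2 (fun z w => by
      simp only [LinearMap.mk₂_apply]
      have h1 : |z.re * w.re + z.im * w.im| ≤ |z.re| * |w.re| + |z.im| * |w.im| := by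
        calc |z.re * w.re + z.im * w.im| ≤ |z.re * w.re| + |z.im * w.im| := abs_add_le _ _
        _ = |z.re| * |w.re| + |z.im| * |w.im| := by rw [abs_mul, abs_mul]
      have h2 : |z.re| * |w.re| + |z.im| * |w.im| ≤ ‖z‖ * ‖w‖ + ‖z‖ * ‖w‖ := by
        gcongr <;> first
          | exact Complex.abs_re_le_norm _
          | exact Complex.abs_im_le_norm _
      calc ‖z.re * w.re + z.im * w.im‖ = |z.re * w.re + z.im * w.im| := rfl
        _ ≤ ‖z‖ * ‖w‖ + ‖z‖ * ‖w‖ := le_trans h1 h2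
        _ = 2 * ‖z‖ * ‖w‖ := by ring)

@[simp] lemma Bre_apply (z w : ℂ) : Bre z w = z.re * w.re + z.im * w.im := rfl

/-- derivative of `t ↦ normSq (F t)` -/
lemma hasDerivAt_normSq_comp {F : ℝ → ℂ} {F' : ℂ} {T : ℝ} (h : HasDerivAt F F' T) :
    HasDerivAt (fun s => Complex.normSq (F s)) (2 * Bre (F T) F') T := by
  have hre : HasDerivAt (fun s => (F s).re) F'.re T :=
    (Complex.reCLM.hasFDerivAt.comp_hasDerivAt T h)
  have him : HasDerivAt (fun s => (F s).im) F'.im T :=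
    (Complex.imCLM.hasFDerivAt.comp_hasDerivAt T h)
  have := (hre.mul hre).add (him.mul him)
  have heq : (fun s => (F s).re * (F s).re + (F s).im * (F s).im)
      = fun s => Complex.normSq (F s) := by
    funext s; rw [Complex.normSq_apply]
  rw [show ((fun s => (F s).re) * (fun s => (F s).re) + (fun s => (F s).im) * (fun s => (F s).im)) = (fun s => (F s).re * (F s).re + (F s).im * (F s).im) from rfl, heq] at this
  refine this.congr_deriv ?_
  simp; ring

end SWAux


namespace SWAux

variable {K : Set (Fin 3 → ℝ)}

lemma contDiff_Dslice {E : Type*} [NormedAddCommGroup E] [NormedSpace ℝ E]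
    {v : (Fin 3 → ℝ) → E} (hv : ContDiff ℝ (⊤ : ℕ∞) v) (w : Fin 3 → ℝ) :
    ContDiff ℝ (⊤ : ℕ∞) (fun x => fderiv ℝ v x w) :=
  (hv.fderiv_right (by simp)).clm_apply contDiff_const

/-- The formal time-derivative of the energy density. -/
def gden (ε : ℝ) (Ψ : ℝ × (Fin 3 → ℝ) → ℂ) (φ : ℝ × (Fin 3 → ℝ) → ℝ)
    (p : ℝ × (Fin 3 → ℝ)) : ℝ :=
  (∑ i : Fin 3, Bre (dSpace i Ψ p) (dTime (dSpace i Ψ) p))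
  + (dTime φ p * Complex.normSq (Ψ p) + φ p * (2 * Bre (Ψ p) (dTime Ψ p)))
  + (∑ i : Fin 3, dSpace i φ p * dTime (dSpace i φ) p)
  + ε * (dTime φ p * dTime (dTime φ) p)

/-- The energy density. -/
def eden (ε : ℝ) (Ψ : ℝ × (Fin 3 → ℝ) → ℂ) (φ : ℝ × (Fin 3 → ℝ) → ℝ)
    (p : ℝ × (Fin 3 → ℝ)) : ℝ :=
  (∑ i : Fin 3, Complex.normSq (dSpace i Ψ p)) / 2
  + φ p * Complex.normSq (Ψ p)
  + (∑ i : Fin 3, (dSpace i φ p) ^ 2) / 2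
  + (ε / 2) * (dTime φ p) ^ 2

lemma hasDerivAt_eden (ε : ℝ) {Ψ : ℝ × (Fin 3 → ℝ) → ℂ} {φ : ℝ × (Fin 3 → ℝ) → ℝ}
    (hΨ : ContDiff ℝ (⊤ : ℕ∞) Ψ) (hφ : ContDiff ℝ (⊤ : ℕ∞) φ) (T : ℝ) (x : Fin 3 → ℝ) :
    HasDerivAt (fun s => eden ε Ψ φ (s, x)) (gden ε Ψ φ (T, x)) T := by
  have t1 : HasDerivAt (fun s => (∑ i : Fin 3, Complex.normSq (dSpace i Ψ (s, x))) / 2)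
      ((∑ i : Fin 3, 2 * Bre (dSpace i Ψ (T, x)) (dTime (dSpace i Ψ) (T, x))) / 2) T := by
    exact (HasDerivAt.fun_sum fun i _ =>
      hasDerivAt_normSq_comp (hasDerivAt_time (contDiff_dSpace hΨ i) T x)).div_const 2
  have t2 : HasDerivAt (fun s => φ (s, x) * Complex.normSq (Ψ (s, x)))
      (dTime φ (T, x) * Complex.normSq (Ψ (T, x))
        + φ (T, x) * (2 * Bre (Ψ (T, x)) (dTime Ψ (T, x)))) T :=
    (hasDerivAt_time hφ T x).mul (hasDerivAt_normSq_comp (hasDerivAt_time hΨ T x))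
  have t3 : HasDerivAt (fun s => (∑ i : Fin 3, (dSpace i φ (s, x)) ^ 2) / 2)
      ((∑ i : Fin 3, 2 * dSpace i φ (T, x) * dTime (dSpace i φ) (T, x)) / 2) T := by
    refine (HasDerivAt.fun_sum fun i _ => ?_).div_const 2
    have h := hasDerivAt_time (contDiff_dSpace hφ i) T x
    simpa [pow_one, mul_comm, mul_assoc, Pi.pow_def] using h.pow 2
  have t4 : HasDerivAt (fun s => (ε / 2) * (dTime φ (s, x)) ^ 2)
      ((ε / 2) * (2 * dTime φ (T, x) * dTime (dTime φ) (T, x))) T := by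
    refine HasDerivAt.const_mul _ ?_
    have h := hasDerivAt_time (contDiff_dTime hφ) T x
    simpa [pow_one, mul_comm, mul_assoc, Pi.pow_def] using h.pow 2
  have := ((t1.add t2).add t3).add t4
  refine this.congr_deriv ?_
  unfold gden
  have e1 : (∑ i : Fin 3, 2 * Bre (dSpace i Ψ (T, x)) (dTime (dSpace i Ψ) (T, x))) / 2
      = ∑ i : Fin 3, Bre (dSpace i Ψ (T, x)) (dTime (dSpace i Ψ) (T, x)) := by
    rw [Finset.sum_div]; exact Finset.sum_congr rfl (fun i _ => by ring)
  have e2 : (∑ i : Fin 3, 2 * dSpace i φ (T, x) * dTime (dSpace i φ) (T, x)) / 2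
      = ∑ i : Fin 3, dSpace i φ (T, x) * dTime (dSpace i φ) (T, x) := by
    rw [Finset.sum_div]; exact Finset.sum_congr rfl (fun i _ => by ring)
  rw [e1, e2]; ring

-- pointwise Schrödinger cancellation
lemma schr_pointwise (r : ℝ) (z w : ℂ) :
    2 * r * Bre z w - Bre (2 * ((r : ℂ) * z) - 2 * (Complex.I * w)) w = 0 := by
  simp [Bre_apply, Complex.mul_re, Complex.mul_im]
  ring

lemma integral_gden_zero
    (ε : ℝ) {Ψ : ℝ × (Fin 3 → ℝ) → ℂ} {φ : ℝ × (Fin 3 → ℝ) → ℝ}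
    (hΨ : ContDiff ℝ (⊤ : ℕ∞) Ψ) (hφ : ContDiff ℝ (⊤ : ℕ∞) φ)
    (hK : IsCompact K)
    (hsuppΨ : ∀ T x, x ∉ K → Ψ (T, x) = 0)
    (hsuppφ : ∀ T x, x ∉ K → φ (T, x) = 0)
    (hSch : ∀ p : ℝ × (Fin 3 → ℝ),
      Complex.I * dTime Ψ p = -(1 / 2) * lapl Ψ p + (φ p : ℂ) * Ψ p)
    (hWave : ∀ p : ℝ × (Fin 3 → ℝ),
      ε * dTime (dTime φ) p = lapl φ p - Complex.normSq (Ψ p))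
    (T : ℝ) :
    ∫ x : Fin 3 → ℝ, gden ε Ψ φ (T, x) = 0 := by
  classical
  set v : Fin 3 → (Fin 3 → ℝ) := fun i => Pi.single i 1 with hv
  set P : (Fin 3 → ℝ) → ℂ := fun x => Ψ (T, x) with hP
  set Pt : (Fin 3 → ℝ) → ℂ := fun x => dTime Ψ (T, x) with hPt
  set u : (Fin 3 → ℝ) → ℝ := fun x => φ (T, x) with hu
  set ut : (Fin 3 → ℝ) → ℝ := fun x => dTime φ (T, x) with hut
  have cdP : ContDiff ℝ (⊤ : ℕ∞) P := sliceCD hΨ T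
  have cdPt : ContDiff ℝ (⊤ : ℕ∞) Pt := sliceCD (contDiff_dTime hΨ) T
  have cdu : ContDiff ℝ (⊤ : ℕ∞) u := sliceCD hφ T
  have cdut : ContDiff ℝ (⊤ : ℕ∞) ut := sliceCD (contDiff_dTime hφ) T
  -- pointwise rewrites into slice language
  have r1 : ∀ i x, dSpace i Ψ (T, x) = fderiv ℝ P x (v i) := fun i x => dSpace_eq_slice hΨ i T x
  have r2 : ∀ i x, dTime (dSpace i Ψ) (T, x) = fderiv ℝ Pt x (v i) := by
    intro i x
    rw [dTime_dSpace_comm hΨ i]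
    exact dSpace_eq_slice (contDiff_dTime hΨ) i T x
  have r3 : ∀ i x, dSpace i (dSpace i Ψ) (T, x)
      = fderiv ℝ (fun y => fderiv ℝ P y (v i)) x (v i) := by
    intro i x
    rw [dSpace_eq_slice (contDiff_dSpace hΨ i) i T x]
    rw [show (fun y => dSpace i Ψ (T, y)) = fun y => fderiv ℝ P y (v i) from funext (r1 i)]
  have r1u : ∀ i x, dSpace i φ (T, x) = fderiv ℝ u x (v i) := fun i x => dSpace_eq_slice hφ i T x
  have r2u : ∀ i x, dTime (dSpace i φ) (T, x) = fderiv ℝ ut x (v i) := by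
    intro i x
    rw [dTime_dSpace_comm hφ i]
    exact dSpace_eq_slice (contDiff_dTime hφ) i T x
  have r3u : ∀ i x, dSpace i (dSpace i φ) (T, x)
      = fderiv ℝ (fun y => fderiv ℝ u y (v i)) x (v i) := by
    intro i x
    rw [dSpace_eq_slice (contDiff_dSpace hφ i) i T x]
    rw [show (fun y => dSpace i φ (T, y)) = fun y => fderiv ℝ u y (v i) from funext (r1u i)]
  -- support facts
  have sP : ∀ x ∉ K, P x = 0 := fun x hx => hsuppΨ T x hx
  have sPt : ∀ x ∉ K, Pt x = 0 := fun x hx => supp_dTime hsuppΨ T x hx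
  have su : ∀ x ∉ K, u x = 0 := fun x hx => hsuppφ T x hx
  have sut : ∀ x ∉ K, ut x = 0 := fun x hx => supp_dTime hsuppφ T x hx
  have sDP : ∀ i, ∀ x ∉ K, fderiv ℝ P x (v i) = 0 := fun i x hx => by
    rw [supp_fderiv_slice hK sP x hx]; rfl
  have sDPt : ∀ i, ∀ x ∉ K, fderiv ℝ Pt x (v i) = 0 := fun i x hx => by
    rw [supp_fderiv_slice hK sPt x hx]; rfl
  have sDu : ∀ i, ∀ x ∉ K, fderiv ℝ u x (v i) = 0 := fun i x hx => by
    rw [supp_fderiv_slice hK su x hx]; rfl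
  have sDut : ∀ i, ∀ x ∉ K, fderiv ℝ ut x (v i) = 0 := fun i x hx => by
    rw [supp_fderiv_slice hK sut x hx]; rfl
  have sDDP : ∀ i, ∀ x ∉ K, fderiv ℝ (fun y => fderiv ℝ P y (v i)) x (v i) = 0 := fun i x hx => by
    rw [supp_fderiv_slice hK (sDP i) x hx]; rfl
  have sDDu : ∀ i, ∀ x ∉ K, fderiv ℝ (fun y => fderiv ℝ u y (v i)) x (v i) = 0 := fun i x hx => by
    rw [supp_fderiv_slice hK (sDu i) x hx]; rfl
  -- continuity facts
  have cP : Continuous P := cdP.continuous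
  have cPt : Continuous Pt := cdPt.continuous
  have cu : Continuous u := cdu.continuous
  have cut : Continuous ut := cdut.continuous
  have cDP : ∀ i, Continuous fun x => fderiv ℝ P x (v i) := fun i =>
    (contDiff_Dslice cdP (v i)).continuous
  have cDPt : ∀ i, Continuous fun x => fderiv ℝ Pt x (v i) := fun i =>
    (contDiff_Dslice cdPt (v i)).continuous
  have cDu : ∀ i, Continuous fun x => fderiv ℝ u x (v i) := fun i =>
    (contDiff_Dslice cdu (v i)).continuous
  have cDut : ∀ i, Continuous fun x => fderiv ℝ ut x (v i) := fun i =>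
    (contDiff_Dslice cdut (v i)).continuous
  have cDDP : ∀ i, Continuous fun x => fderiv ℝ (fun y => fderiv ℝ P y (v i)) x (v i) := fun i =>
    (contDiff_Dslice (contDiff_Dslice cdP (v i)) (v i)).continuous
  have cDDu : ∀ i, Continuous fun x => fderiv ℝ (fun y => fderiv ℝ u y (v i)) x (v i) := fun i =>
    (contDiff_Dslice (contDiff_Dslice cdu (v i)) (v i)).continuous
  have contBre : ∀ {a b : (Fin 3 → ℝ) → ℂ}, Continuous a → Continuous b →
      Continuous fun x => Bre (a x) (b x) := by
    intro a b ha hb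
    simp only [Bre_apply]
    exact ((Complex.continuous_re.comp ha).mul (Complex.continuous_re.comp hb)).add
      ((Complex.continuous_im.comp ha).mul (Complex.continuous_im.comp hb))
  have intK' : ∀ {w : (Fin 3 → ℝ) → ℝ}, Continuous w → (∀ x ∉ K, w x = 0) → Integrable w :=
    fun hc hs => integrableK hK hc hs
  -- integrability facts
  have int2uB : Integrable fun x => 2 * u x * Bre (P x) (Pt x) :=
    intK' ((continuous_const.mul cu).mul (contBre cP cPt))
      (fun x hx => by simp [su x hx])
  have intBre1 : ∀ i, Integrable fun x => Bre (fderiv ℝ P x (v i)) (fderiv ℝ Pt x (v i)) :=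
    fun i => intK' (contBre (cDP i) (cDPt i)) (fun x hx => by simp [sDP i x hx])
  have intBre2 : ∀ i, Integrable fun x =>
      Bre (fderiv ℝ (fun y => fderiv ℝ P y (v i)) x (v i)) (Pt x) :=
    fun i => intK' (contBre (cDDP i) cPt) (fun x hx => by simp [sDDP i x hx])
  have intBre3 : ∀ i, Integrable fun x => Bre (fderiv ℝ P x (v i)) (Pt x) :=
    fun i => intK' (contBre (cDP i) cPt) (fun x hx => by simp [sDP i x hx])
  have intDuDut : ∀ i, Integrable fun x => fderiv ℝ u x (v i) * fderiv ℝ ut x (v i) :=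
    fun i => intK' ((cDu i).mul (cDut i)) (fun x hx => by simp [sDu i x hx])
  have intUtDDu : ∀ i, Integrable fun x =>
      ut x * fderiv ℝ (fun y => fderiv ℝ u y (v i)) x (v i) :=
    fun i => intK' (cut.mul (cDDu i)) (fun x hx => by simp [sut x hx])
  have intUtDu : ∀ i, Integrable fun x => ut x * fderiv ℝ u x (v i) :=
    fun i => intK' (cut.mul (cDu i)) (fun x hx => by simp [sut x hx])
  have intDutDu : ∀ i, Integrable fun x => fderiv ℝ ut x (v i) * fderiv ℝ u x (v i) :=
    fun i => intK' ((cDut i).mul (cDu i)) (fun x hx => by simp [sDut i x hx])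
  -- pointwise decomposition using the wave equation
  have hpt : ∀ x, gden ε Ψ φ (T, x)
      = ((∑ i : Fin 3, Bre (fderiv ℝ P x (v i)) (fderiv ℝ Pt x (v i)))
          + 2 * u x * Bre (P x) (Pt x))
        + ∑ i : Fin 3, (fderiv ℝ u x (v i) * fderiv ℝ ut x (v i)
          + ut x * fderiv ℝ (fun y => fderiv ℝ u y (v i)) x (v i)) := by
    intro x
    have s1 : (∑ i : Fin 3, Bre (dSpace i Ψ (T, x)) (dTime (dSpace i Ψ) (T, x)))
        = ∑ i : Fin 3, Bre (fderiv ℝ P x (v i)) (fderiv ℝ Pt x (v i)) :=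
      Finset.sum_congr rfl fun i _ => by rw [r1 i x, r2 i x]
    have s2 : (∑ i : Fin 3, dSpace i φ (T, x) * dTime (dSpace i φ) (T, x))
        = ∑ i : Fin 3, fderiv ℝ u x (v i) * fderiv ℝ ut x (v i) :=
      Finset.sum_congr rfl fun i _ => by rw [r1u i x, r2u i x]
    have hl : lapl φ (T, x) = ∑ i : Fin 3, fderiv ℝ (fun y => fderiv ℝ u y (v i)) x (v i) :=
      Finset.sum_congr rfl fun i _ => r3u i x
    have hw2 : ε * (dTime φ (T, x) * dTime (dTime φ) (T, x))
        = dTime φ (T, x) * ((∑ i : Fin 3, fderiv ℝ (fun y => fderiv ℝ u y (v i)) x (v i))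
            - Complex.normSq (Ψ (T, x))) := by
      rw [mul_left_comm, hWave (T, x), hl]
    unfold gden
    rw [s1, s2, hw2]
    rw [Finset.sum_add_distrib, ← Finset.mul_sum]
    ring
  -- integral of the wave part vanishes by integration by parts
  have hWzero : (∫ x, ∑ i : Fin 3, (fderiv ℝ u x (v i) * fderiv ℝ ut x (v i)
      + ut x * fderiv ℝ (fun y => fderiv ℝ u y (v i)) x (v i))) = 0 := by
    rw [integral_finset_sum (f := fun (i : Fin 3) x => fderiv ℝ u x (v i) * fderiv ℝ ut x (v i)
      + ut x * fderiv ℝ (fun y => fderiv ℝ u y (v i)) x (v i)) _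
      fun i _ => (intDuDut i).add (intUtDDu i)]
    refine Finset.sum_eq_zero fun i _ => ?_
    rw [integral_add (intDuDut i) (intUtDDu i)]
    have ibp : ∫ x, ut x * fderiv ℝ (fun y => fderiv ℝ u y (v i)) x (v i)
        = - ∫ x, fderiv ℝ ut x (v i) * fderiv ℝ u x (v i) :=
      integral_mul_fderiv_eq_neg_fderiv_mul_of_integrable (intDutDu i) (intUtDDu i)
        (intUtDu i) (fun x _ => cdut.differentiable (by simp) x)
        (fun x _ => (contDiff_Dslice cdu (v i)).differentiable (by simp) x)
    rw [ibp]
    rw [show (∫ x, fderiv ℝ ut x (v i) * fderiv ℝ u x (v i))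
        = ∫ x, fderiv ℝ u x (v i) * fderiv ℝ ut x (v i) from by
      congr 1; funext x; ring]
    ring
  -- integral of the Schrödinger part vanishes
  have hAzero : (∫ x, ((∑ i : Fin 3, Bre (fderiv ℝ P x (v i)) (fderiv ℝ Pt x (v i)))
      + 2 * u x * Bre (P x) (Pt x))) = 0 := by
    rw [integral_add (integrable_finset_sum _ fun i _ => intBre1 i) int2uB,
      integral_finset_sum (f := fun (i : Fin 3) x =>
        Bre (fderiv ℝ P x (v i)) (fderiv ℝ Pt x (v i))) _ fun i _ => intBre1 i]
    have ibp : ∀ i : Fin 3, (∫ x, Bre (fderiv ℝ P x (v i)) (fderiv ℝ Pt x (v i)))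
        = - ∫ x, Bre (fderiv ℝ (fun y => fderiv ℝ P y (v i)) x (v i)) (Pt x) := by
      intro i
      exact integral_bilinear_fderiv_right_eq_neg_left_of_integrable (B := Bre)
        (intBre2 i) (intBre1 i) (intBre3 i)
        (fun x _ => (contDiff_Dslice cdP (v i)).differentiable (by simp) x) (fun x _ => cdPt.differentiable (by simp) x)
    rw [Finset.sum_congr rfl fun i _ => ibp i, Finset.sum_neg_distrib,
      ← integral_finset_sum (f := fun (i : Fin 3) x =>
        Bre (fderiv ℝ (fun y => fderiv ℝ P y (v i)) x (v i)) (Pt x)) _ fun i _ => intBre2 i]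
    rw [← sub_eq_neg_add, ← integral_sub int2uB
      (integrable_finset_sum _ fun i _ => intBre2 i)]
    have hzero : ∀ x, (2 * u x * Bre (P x) (Pt x)
        - ∑ i : Fin 3, Bre (fderiv ℝ (fun y => fderiv ℝ P y (v i)) x (v i)) (Pt x)) = 0 := by
      intro x
      have hsum : (∑ i : Fin 3, Bre (fderiv ℝ (fun y => fderiv ℝ P y (v i)) x (v i)) (Pt x))
          = Bre (∑ i : Fin 3, fderiv ℝ (fun y => fderiv ℝ P y (v i)) x (v i)) (Pt x) := by
        rw [show (Bre (∑ i : Fin 3, fderiv ℝ (fun y => fderiv ℝ P y (v i)) x (v i)) (Pt x))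
            = Bre.flip (Pt x) (∑ i : Fin 3, fderiv ℝ (fun y => fderiv ℝ P y (v i)) x (v i))
            from rfl]
        rw [map_sum]
        rfl
      have hls : lapl Ψ (T, x) = ∑ i : Fin 3, fderiv ℝ (fun y => fderiv ℝ P y (v i)) x (v i) :=
        Finset.sum_congr rfl fun i _ => r3 i x
      have hsch := hSch (T, x)
      rw [hls] at hsch
      have hL : (∑ i : Fin 3, fderiv ℝ (fun y => fderiv ℝ P y (v i)) x (v i))
          = 2 * ((φ (T, x) : ℂ) * Ψ (T, x)) - 2 * (Complex.I * dTime Ψ (T, x)) := by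
        linear_combination (2 : ℂ) * hsch
      rw [hsum, hL]
      exact schr_pointwise (φ (T, x)) (Ψ (T, x)) (dTime Ψ (T, x))
    rw [show (fun x => 2 * u x * Bre (P x) (Pt x)
        - ∑ i : Fin 3, Bre (fderiv ℝ (fun y => fderiv ℝ P y (v i)) x (v i)) (Pt x))
        = fun _ => (0 : ℝ) from funext hzero]
    simp
  have intA : Integrable fun x =>
      (∑ i : Fin 3, Bre (fderiv ℝ P x (v i)) (fderiv ℝ Pt x (v i)))
        + 2 * u x * Bre (P x) (Pt x) :=
    (integrable_finset_sum _ fun i _ => intBre1 i).add int2uB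
  have intW : Integrable fun x => ∑ i : Fin 3, (fderiv ℝ u x (v i) * fderiv ℝ ut x (v i)
      + ut x * fderiv ℝ (fun y => fderiv ℝ u y (v i)) x (v i)) :=
    integrable_finset_sum _ fun i _ => (intDuDut i).add (intUtDDu i)
  calc ∫ x : Fin 3 → ℝ, gden ε Ψ φ (T, x)
      = ∫ x, (((∑ i : Fin 3, Bre (fderiv ℝ P x (v i)) (fderiv ℝ Pt x (v i)))
          + 2 * u x * Bre (P x) (Pt x))
        + ∑ i : Fin 3, (fderiv ℝ u x (v i) * fderiv ℝ ut x (v i)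
          + ut x * fderiv ℝ (fun y => fderiv ℝ u y (v i)) x (v i))) := by
        congr 1; funext x; exact hpt x
    _ = 0 := by rw [integral_add intA intW, hAzero, hWzero]; ring

section Assembly

variable {K : Set (Fin 3 → ℝ)} {Ψ : ℝ × (Fin 3 → ℝ) → ℂ} {φ : ℝ × (Fin 3 → ℝ) → ℝ}

lemma contBreX {X : Type*} [TopologicalSpace X] {a b : X → ℂ}
    (ha : Continuous a) (hb : Continuous b) : Continuous fun x => Bre (a x) (b x) := by
  simp only [Bre_apply]
  exact ((Complex.continuous_re.comp ha).mul (Complex.continuous_re.comp hb)).add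
    ((Complex.continuous_im.comp ha).mul (Complex.continuous_im.comp hb))

lemma cont_gden (ε : ℝ) (hΨ : ContDiff ℝ (⊤ : ℕ∞) Ψ) (hφ : ContDiff ℝ (⊤ : ℕ∞) φ) :
    Continuous (gden ε Ψ φ) := by
  unfold gden
  refine (((?_ : Continuous _).add ?_).add ?_).add ?_
  · exact continuous_finset_sum _ fun i _ => contBreX
      (contDiff_dSpace hΨ i).continuous (contDiff_dTime (contDiff_dSpace hΨ i)).continuous
  · exact ((contDiff_dTime hφ).continuous.mul
        (Complex.continuous_normSq.comp hΨ.continuous)).add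
      (hφ.continuous.mul (continuous_const.mul
        (contBreX hΨ.continuous (contDiff_dTime hΨ).continuous)))
  · exact continuous_finset_sum _ fun i _ =>
      (contDiff_dSpace hφ i).continuous.mul (contDiff_dTime (contDiff_dSpace hφ i)).continuous
  · exact continuous_const.mul ((contDiff_dTime hφ).continuous.mul
      (contDiff_dTime (contDiff_dTime hφ)).continuous)

lemma cont_eden (ε : ℝ) (hΨ : ContDiff ℝ (⊤ : ℕ∞) Ψ) (hφ : ContDiff ℝ (⊤ : ℕ∞) φ) :
    Continuous (eden ε Ψ φ) := by
  unfold eden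
  refine (((?_ : Continuous _).add ?_).add ?_).add ?_
  · exact (continuous_finset_sum _ fun i _ =>
      Complex.continuous_normSq.comp (contDiff_dSpace hΨ i).continuous).div_const 2
  · exact hφ.continuous.mul (Complex.continuous_normSq.comp hΨ.continuous)
  · exact (continuous_finset_sum _ fun i _ =>
      ((contDiff_dSpace hφ i).continuous.pow 2)).div_const 2
  · exact continuous_const.mul ((contDiff_dTime hφ).continuous.pow 2)

lemma supp_gden (ε : ℝ) (hK : IsCompact K)
    (hsuppΨ : ∀ T x, x ∉ K → Ψ (T, x) = 0) (hsuppφ : ∀ T x, x ∉ K → φ (T, x) = 0) :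
    ∀ T x, x ∉ K → gden ε Ψ φ (T, x) = 0 := by
  intro T x hx
  unfold gden
  rw [Finset.sum_eq_zero fun i _ => by
    rw [supp_dSpace hK hsuppΨ i T x hx]; simp]
  rw [Finset.sum_eq_zero fun i _ => by
    rw [supp_dSpace hK hsuppφ i T x hx]; ring]
  rw [supp_dTime hsuppφ T x hx, hsuppφ T x hx]
  ring

lemma supp_eden (ε : ℝ) (hK : IsCompact K)
    (hsuppΨ : ∀ T x, x ∉ K → Ψ (T, x) = 0) (hsuppφ : ∀ T x, x ∉ K → φ (T, x) = 0) :
    ∀ T x, x ∉ K → eden ε Ψ φ (T, x) = 0 := by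
  intro T x hx
  unfold eden
  rw [Finset.sum_eq_zero fun i _ => by
    rw [supp_dSpace hK hsuppΨ i T x hx]; simp]
  rw [Finset.sum_eq_zero fun i _ => by
    rw [supp_dSpace hK hsuppφ i T x hx]; ring]
  rw [hsuppφ T x hx, supp_dTime hsuppφ T x hx]
  ring

lemma energy_hasDerivAt_zero (ε : ℝ) (hΨ : ContDiff ℝ (⊤ : ℕ∞) Ψ) (hφ : ContDiff ℝ (⊤ : ℕ∞) φ)
    (hK : IsCompact K)
    (hsuppΨ : ∀ T x, x ∉ K → Ψ (T, x) = 0) (hsuppφ : ∀ T x, x ∉ K → φ (T, x) = 0)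
    (hSch : ∀ p : ℝ × (Fin 3 → ℝ),
      Complex.I * dTime Ψ p = -(1 / 2) * lapl Ψ p + (φ p : ℂ) * Ψ p)
    (hWave : ∀ p : ℝ × (Fin 3 → ℝ),
      ε * dTime (dTime φ) p = lapl φ p - Complex.normSq (Ψ p))
    (T₀ : ℝ) :
    HasDerivAt (fun t => ∫ x : Fin 3 → ℝ, eden ε Ψ φ (t, x)) 0 T₀ := by
  obtain ⟨M, hM⟩ := ((isCompact_closedBall T₀ 1).prod hK).exists_bound_of_continuousOn
    (cont_gden ε hΨ hφ).continuousOn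
  have hb_int : Integrable (K.indicator (fun _ => M)) := by
    rw [integrable_indicator_iff hK.measurableSet]
    exact integrableOn_const hK.measure_lt_top.ne
  have h := hasDerivAt_integral_of_dominated_loc_of_deriv_le
    (F := fun t a => eden ε Ψ φ (t, a)) (F' := fun t a => gden ε Ψ φ (t, a))
    (bound := K.indicator (fun _ => M)) (x₀ := T₀) (s := Metric.ball T₀ 1) (Metric.ball_mem_nhds T₀ one_pos)
    (Filter.Eventually.of_forall fun t =>
      ((cont_eden ε hΨ hφ).comp (Continuous.prodMk_right t)).aestronglyMeasurable)
    (integrableK hK ((cont_eden ε hΨ hφ).comp (Continuous.prodMk_right T₀))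
      (fun x hx => supp_eden ε hK hsuppΨ hsuppφ T₀ x hx))
    (((cont_gden ε hΨ hφ).comp (Continuous.prodMk_right T₀)).aestronglyMeasurable)
    (Filter.Eventually.of_forall fun a t ht => ?_)
    hb_int
    (Filter.Eventually.of_forall fun a t _ => hasDerivAt_eden ε hΨ hφ t a)
  · have h2 := h.2
    rw [integral_gden_zero ε hΨ hφ hK hsuppΨ hsuppφ hSch hWave T₀] at h2
    exact h2
  · by_cases ha : a ∈ K
    · rw [Set.indicator_of_mem ha]
      exact hM (t, a) ⟨Metric.ball_subset_closedBall ht, ha⟩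
    · rw [Set.indicator_of_notMem ha]
      show ‖gden ε Ψ φ (t, a)‖ ≤ 0
      rw [supp_gden ε hK hsuppΨ hsuppφ t a ha]
      simp

end Assembly

end SWAux

/-- conservation of the energy of the Schrödinger-Wave system. -/
theorem sw_energy_conservation
    (ε : ℝ) (hε : 0 < ε)
    (Ψ : ℝ × (Fin 3 → ℝ) → ℂ) (φ : ℝ × (Fin 3 → ℝ) → ℝ)
    (hΨ : ContDiff ℝ (⊤ : ℕ∞) Ψ) (hφ : ContDiff ℝ (⊤ : ℕ∞) φ)
    (K : Set (Fin 3 → ℝ)) (hK : IsCompact K)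
    (hsuppΨ : ∀ T : ℝ, ∀ x : Fin 3 → ℝ, x ∉ K → Ψ (T, x) = 0)
    (hsuppφ : ∀ T : ℝ, ∀ x : Fin 3 → ℝ, x ∉ K → φ (T, x) = 0)
    (hSch : ∀ p : ℝ × (Fin 3 → ℝ),
      Complex.I * dTime Ψ p = -(1 / 2) * lapl Ψ p + (φ p : ℂ) * Ψ p)
    (hWave : ∀ p : ℝ × (Fin 3 → ℝ),
      ε * dTime (dTime φ) p = lapl φ p - Complex.normSq (Ψ p)) :
    ∀ T₁ T₂ : ℝ,
      (∫ x : Fin 3 → ℝ,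
        ((∑ i : Fin 3, Complex.normSq (dSpace i Ψ (T₁, x))) / 2
          + φ (T₁, x) * Complex.normSq (Ψ (T₁, x))
          + (∑ i : Fin 3, (dSpace i φ (T₁, x)) ^ 2) / 2
          + (ε / 2) * (dTime φ (T₁, x)) ^ 2))
      = ∫ x : Fin 3 → ℝ,
        ((∑ i : Fin 3, Complex.normSq (dSpace i Ψ (T₂, x))) / 2
          + φ (T₂, x) * Complex.normSq (Ψ (T₂, x))
          + (∑ i : Fin 3, (dSpace i φ (T₂, x)) ^ 2) / 2
          + (ε / 2) * (dTime φ (T₂, x)) ^ 2) := by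
  intro T₁ T₂
  have key : ∀ T₁ T₂ : ℝ, (∫ x : Fin 3 → ℝ, SWAux.eden ε Ψ φ (T₁, x))
      = ∫ x : Fin 3 → ℝ, SWAux.eden ε Ψ φ (T₂, x) := by
    apply is_const_of_deriv_eq_zero
    · exact fun T => (SWAux.energy_hasDerivAt_zero ε hΨ hφ hK hsuppΨ hsuppφ
        hSch hWave T).differentiableAt
    · exact fun T => (SWAux.energy_hasDerivAt_zero ε hΨ hφ hK hsuppΨ hsuppφ
        hSch hWave T).deriv
  exact key T₁ T₂
end
end

section
/- Let ψ : ℝ³ → ℂ and φ, p_φ : ℝ³ → ℝ be smooth and compactly supported, and define the second-order generating Hamiltonian G₂[ψ, ψ̄, φ, p_φ] := −(i/16)∫((Δψ)² − (Δψ̄)²) + (i/16)∫|ψ|²(ψ² − ψ̄²) + (i/128)∫(ψ⁴ − ψ̄⁴) − (i/16)∫(Δφ)(ψ² − ψ̄²) + (i/4)∫φ(ψΔψ − ψ̄Δψ̄) − (i/4)∫φ²(ψ² − ψ̄²) + (3/16)∫p_φ(ψΔψ + ψ̄Δψ̄) − (3/8)∫φp_φ(ψ² + ψ̄²) + (3i/16)∫p_φ²(ψ²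 − ψ̄²) − (1/32)∫(Δp_φ)(ψ² + ψ̄²), where all integrals are over ℝ³. Then its time average along the harmonic-oscillator flow vanishes: (1/2π) ∫₀^{2π} G₂[e^{−is}ψ, e^{is}ψ̄, φ, p_φ] ds = 0. -/
noncomputable section

open MeasureTheory

variable {E : Type*} [NormedAddCommGroup E] [NormedSpace ℝ E]

/-- Partial derivative in the i-th variable for space-only fields. -/
def pdx (i : Fin 3) (f : (Fin 3 → ℝ) → E) (x : Fin 3 → ℝ) : E :=
  deriv (fun y => f (Function.update x i y)) (x i)

/-- Laplacian for space-only fields. -/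
def laplS (f : (Fin 3 → ℝ) → E) (x : Fin 3 → ℝ) : E :=
  ∑ i : Fin 3, pdx i (pdx i f) x

/-- The second-order generating Hamiltonian G₂[ψ, ψ̄, φ, p_φ], with ψ and its
conjugate treated as independent arguments. -/
def G2 (ψ₁ ψ₂ : (Fin 3 → ℝ) → ℂ) (φ pφ : (Fin 3 → ℝ) → ℝ) : ℂ :=
  -(Complex.I / 16) * (∫ x : Fin 3 → ℝ, ((laplS ψ₁ x) ^ 2 - (laplS ψ₂ x) ^ 2))
  + (Complex.I / 16) * (∫ x : Fin 3 → ℝ, (ψ₁ x * ψ₂ x) * ((ψ₁ x) ^ 2 - (ψ₂ x) ^ 2))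
  + (Complex.I / 128) * (∫ x : Fin 3 → ℝ, ((ψ₁ x) ^ 4 - (ψ₂ x) ^ 4))
  - (Complex.I / 16) * (∫ x : Fin 3 → ℝ, ((laplS φ x : ℝ) : ℂ) * ((ψ₁ x) ^ 2 - (ψ₂ x) ^ 2))
  + (Complex.I / 4) * (∫ x : Fin 3 → ℝ, ((φ x : ℝ) : ℂ) * (ψ₁ x * laplS ψ₁ x - ψ₂ x * laplS ψ₂ x))
  - (Complex.I / 4) * (∫ x : Fin 3 → ℝ, ((φ x : ℝ) : ℂ) ^ 2 * ((ψ₁ x) ^ 2 - (ψ₂ x) ^ 2))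
  + (3 / 16 : ℂ) * (∫ x : Fin 3 → ℝ, ((pφ x : ℝ) : ℂ) * (ψ₁ x * laplS ψ₁ x + ψ₂ x * laplS ψ₂ x))
  - (3 / 8 : ℂ) * (∫ x : Fin 3 → ℝ, ((φ x : ℝ) : ℂ) * ((pφ x : ℝ) : ℂ) * ((ψ₁ x) ^ 2 + (ψ₂ x) ^ 2))
  + (3 * Complex.I / 16) * (∫ x : Fin 3 → ℝ, ((pφ x : ℝ) : ℂ) ^ 2 * ((ψ₁ x) ^ 2 - (ψ₂ x) ^ 2))
  - (1 / 32 : ℂ) * (∫ x : Fin 3 → ℝ, ((laplS pφ x : ℝ) : ℂ) * ((ψ₁ x) ^ 2 + (ψ₂ x) ^ 2))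

lemma pdx_const_mul (c : ℂ) (f : (Fin 3 → ℝ) → ℂ) (i : Fin 3) :
    pdx i (fun x => c * f x) = fun x => c * pdx i f x := by
  funext x
  exact deriv_const_mul_field c

lemma laplS_const_mul (c : ℂ) (f : (Fin 3 → ℝ) → ℂ) :
    laplS (fun x => c * f x) = fun x => c * laplS f x := by
  funext x
  simp only [laplS, pdx_const_mul, Finset.mul_sum]

lemma pdx_eq_fderiv {f : (Fin 3 → ℝ) → E} (hf : Differentiable ℝ f) (i : Fin 3) :
    pdx i f = fun x => fderiv ℝ f x (Pi.single i 1) := by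
  funext x
  have hu : HasDerivAt (Function.update x i) (Pi.single i (1:ℝ)) (x i) :=
    hasDerivAt_update x i (x i)
  have hfx : HasFDerivAt f (fderiv ℝ f x) (Function.update x i (x i)) := by
    rw [Function.update_eq_self]; exact (hf x).hasFDerivAt
  have h := hfx.comp_hasDerivAt (x i) hu
  exact h.deriv

lemma contDiff_pdx {f : (Fin 3 → ℝ) → E} (hf : ContDiff ℝ (⊤ : ℕ∞) f) (i : Fin 3) :
    ContDiff ℝ (⊤ : ℕ∞) (pdx i f) := by
  rw [pdx_eq_fderiv (hf.differentiable (by simp)) i]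
  exact (hf.fderiv_right (by simp)).clm_apply contDiff_const

lemma hcs_pdx {f : (Fin 3 → ℝ) → E} (hf : HasCompactSupport f) (i : Fin 3) :
    HasCompactSupport (pdx i f) := by
  apply hf.mono'
  intro x hx
  by_contra hxt
  apply hx
  have hopen : IsOpen (tsupport f)ᶜ := (isClosed_tsupport f).isOpen_compl
  have hmem : (fun y => Function.update x i y) ⁻¹' (tsupport f)ᶜ ∈ nhds (x i) :=
    (hasDerivAt_update x i (x i)).continuousAt.preimage_mem_nhds
      (hopen.mem_nhds (by simpa [Function.update_eq_self] using hxt))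
  have hev : (fun y => f (Function.update x i y)) =ᶠ[nhds (x i)] fun _ => (0:E) := by
    filter_upwards [hmem] with y hy
    exact image_eq_zero_of_notMem_tsupport hy
  show pdx i f x = 0
  simp only [pdx]
  rw [hev.deriv_eq, deriv_const]

lemma contDiff_laplS {f : (Fin 3 → ℝ) → E} (hf : ContDiff ℝ (⊤ : ℕ∞) f) :
    ContDiff ℝ (⊤ : ℕ∞) (laplS f) := by
  have : laplS f = fun x => ∑ i : Fin 3, pdx i (pdx i f) x := rfl
  rw [this]
  exact ContDiff.sum (fun i _ => contDiff_pdx (contDiff_pdx hf i) i)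

lemma hcs_laplS {f : (Fin 3 → ℝ) → E} (hf : HasCompactSupport f) :
    HasCompactSupport (laplS f) := by
  have : laplS f = (fun x => pdx 0 (pdx 0 f) x) + (fun x => pdx 1 (pdx 1 f) x)
      + (fun x => pdx 2 (pdx 2 f) x) := by
    funext x; simp [laplS, Fin.sum_univ_three]
  rw [this]
  exact ((hcs_pdx (hcs_pdx hf 0) 0).add (hcs_pdx (hcs_pdx hf 1) 1)).add
    (hcs_pdx (hcs_pdx hf 2) 2)

lemma hcs_of_zero_imp {f g : (Fin 3 → ℝ) → ℂ} (hf : HasCompactSupport f)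
    (h : ∀ x, f x = 0 → g x = 0) : HasCompactSupport g := by
  apply hf.mono'
  intro x hx
  exact subset_tsupport f (show x ∈ Function.support f from fun h0 => hx (h x h0))

lemma exp_avg (n : ℤ) (hn : n ≠ 0) :
    ∫ s in (0:ℝ)..(2*Real.pi), Complex.exp ((n : ℂ) * Complex.I * s) = 0 := by
  have hc : (n : ℂ) * Complex.I ≠ 0 := by
    simp [Complex.I_ne_zero, hn]
  rw [integral_exp_mul_complex hc]
  push_cast
  rw [show (n:ℂ) * Complex.I * (2*Real.pi) = (n:ℂ) * (2*Real.pi*Complex.I) by ring,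
    Complex.exp_int_mul_two_pi_mul_I]
  simp

lemma split_sub (c d : ℂ) {f g : (Fin 3 → ℝ) → ℂ} (hf : Integrable f) (hg : Integrable g) :
    ∫ x, (c * f x - d * g x) = c * (∫ x, f x) - d * (∫ x, g x) := by
  rw [integral_sub (hf.const_mul c) (hg.const_mul d)]
  simp only [← smul_eq_mul, integral_smul]

lemma split_add (c d : ℂ) {f g : (Fin 3 → ℝ) → ℂ} (hf : Integrable f) (hg : Integrable g) :
    ∫ x, (c * f x + d * g x) = c * (∫ x, f x) + d * (∫ x, g x) := by
  rw [integral_add (hf.const_mul c) (hg.const_mul d)]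
  simp only [← smul_eq_mul, integral_smul]

def cA (ψ ψc : (Fin 3 → ℝ) → ℂ) (φ pφ : (Fin 3 → ℝ) → ℝ) : ℂ :=
  -(Complex.I / 16) * (∫ x : Fin 3 → ℝ, (laplS ψ x) ^ 2)
  + (Complex.I / 16) * (∫ x : Fin 3 → ℝ, ψ x ^ 3 * ψc x)
  - (Complex.I / 16) * (∫ x : Fin 3 → ℝ, ((laplS φ x : ℝ) : ℂ) * ψ x ^ 2)
  + (Complex.I / 4) * (∫ x : Fin 3 → ℝ, ((φ x : ℝ) : ℂ) * (ψ x * laplS ψ x))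
  - (Complex.I / 4) * (∫ x : Fin 3 → ℝ, ((φ x : ℝ) : ℂ) ^ 2 * ψ x ^ 2)
  + (3 / 16 : ℂ) * (∫ x : Fin 3 → ℝ, ((pφ x : ℝ) : ℂ) * (ψ x * laplS ψ x))
  - (3 / 8 : ℂ) * (∫ x : Fin 3 → ℝ, ((φ x : ℝ) : ℂ) * ((pφ x : ℝ) : ℂ) * ψ x ^ 2)
  + (3 * Complex.I / 16) * (∫ x : Fin 3 → ℝ, ((pφ x : ℝ) : ℂ) ^ 2 * ψ x ^ 2)
  - (1 / 32 : ℂ) * (∫ x : Fin 3 → ℝ, ((laplS pφ x : ℝ) : ℂ) * ψ x ^ 2)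

def cB (ψ ψc : (Fin 3 → ℝ) → ℂ) (φ pφ : (Fin 3 → ℝ) → ℝ) : ℂ :=
  (Complex.I / 16) * (∫ x : Fin 3 → ℝ, (laplS ψc x) ^ 2)
  - (Complex.I / 16) * (∫ x : Fin 3 → ℝ, ψ x * ψc x ^ 3)
  + (Complex.I / 16) * (∫ x : Fin 3 → ℝ, ((laplS φ x : ℝ) : ℂ) * ψc x ^ 2)
  - (Complex.I / 4) * (∫ x : Fin 3 → ℝ, ((φ x : ℝ) : ℂ) * (ψc x * laplS ψc x))
  + (Complex.I / 4) * (∫ x : Fin 3 → ℝ, ((φ x : ℝ) : ℂ) ^ 2 * ψc x ^ 2)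
  + (3 / 16 : ℂ) * (∫ x : Fin 3 → ℝ, ((pφ x : ℝ) : ℂ) * (ψc x * laplS ψc x))
  - (3 / 8 : ℂ) * (∫ x : Fin 3 → ℝ, ((φ x : ℝ) : ℂ) * ((pφ x : ℝ) : ℂ) * ψc x ^ 2)
  - (3 * Complex.I / 16) * (∫ x : Fin 3 → ℝ, ((pφ x : ℝ) : ℂ) ^ 2 * ψc x ^ 2)
  - (1 / 32 : ℂ) * (∫ x : Fin 3 → ℝ, ((laplS pφ x : ℝ) : ℂ) * ψc x ^ 2)

def cC (ψ : (Fin 3 → ℝ) → ℂ) : ℂ := (Complex.I / 128) * (∫ x : Fin 3 → ℝ, ψ x ^ 4)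

def cD (ψc : (Fin 3 → ℝ) → ℂ) : ℂ := -(Complex.I / 128) * (∫ x : Fin 3 → ℝ, ψc x ^ 4)

lemma G2_flow (ψ ψc : (Fin 3 → ℝ) → ℂ) (φ pφ : (Fin 3 → ℝ) → ℝ)
    (hψ : ContDiff ℝ (⊤ : ℕ∞) ψ) (hψc : ContDiff ℝ (⊤ : ℕ∞) ψc) (hφ : ContDiff ℝ (⊤ : ℕ∞) φ)
    (hpφ : ContDiff ℝ (⊤ : ℕ∞) pφ) (hψs : HasCompactSupport ψ) (hψcs : HasCompactSupport ψc)
    (hφs : HasCompactSupport φ) (hpφs : HasCompactSupport pφ) (s : ℝ) :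
    G2 (fun x => Complex.exp (-(Complex.I * s)) * ψ x)
       (fun x => Complex.exp (Complex.I * s) * ψc x) φ pφ
    = Complex.exp ((-2 : ℂ) * Complex.I * s) * cA ψ ψc φ pφ
      + Complex.exp ((2 : ℂ) * Complex.I * s) * cB ψ ψc φ pφ
      + Complex.exp ((-4 : ℂ) * Complex.I * s) * cC ψ
      + Complex.exp ((4 : ℂ) * Complex.I * s) * cD ψc := by
  have hψC : Continuous ψ := hψ.continuous
  have hψcC : Continuous ψc := hψc.continuous
  have hφC : Continuous φ := hφ.continuous
  have hpφC : Continuous pφ := hpφ.continuous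
  have hLψ : Continuous (laplS ψ) := (contDiff_laplS hψ).continuous
  have hLψc : Continuous (laplS ψc) := (contDiff_laplS hψc).continuous
  have hLφ : Continuous (laplS φ) := (contDiff_laplS hφ).continuous
  have hLpφ : Continuous (laplS pφ) := (contDiff_laplS hpφ).continuous
  have hSψ2 : HasCompactSupport (laplS ψ) := hcs_laplS hψs
  have hSψc2 : HasCompactSupport (laplS ψc) := hcs_laplS hψcs
  have I1 : Integrable (fun x : Fin 3 → ℝ => (laplS ψ x) ^ 2) volume := by
    apply Continuous.integrable_of_hasCompactSupport
    · fun_prop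
    · exact hcs_of_zero_imp hSψ2 (fun x h0 => by simp [h0])
  have I2 : Integrable (fun x : Fin 3 → ℝ => (laplS ψc x) ^ 2) volume := by
    apply Continuous.integrable_of_hasCompactSupport
    · fun_prop
    · exact hcs_of_zero_imp hSψc2 (fun x h0 => by simp [h0])
  have I3 : Integrable (fun x : Fin 3 → ℝ => ψ x ^ 3 * ψc x) volume := by
    apply Continuous.integrable_of_hasCompactSupport
    · fun_prop
    · exact hcs_of_zero_imp hψs (fun x h0 => by simp [h0])
  have I4 : Integrable (fun x : Fin 3 → ℝ => ψ x * ψc x ^ 3) volume := by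
    apply Continuous.integrable_of_hasCompactSupport
    · fun_prop
    · exact hcs_of_zero_imp hψs (fun x h0 => by simp [h0])
  have I5 : Integrable (fun x : Fin 3 → ℝ => ψ x ^ 4) volume := by
    apply Continuous.integrable_of_hasCompactSupport
    · fun_prop
    · exact hcs_of_zero_imp hψs (fun x h0 => by simp [h0])
  have I6 : Integrable (fun x : Fin 3 → ℝ => ψc x ^ 4) volume := by
    apply Continuous.integrable_of_hasCompactSupport
    · fun_prop
    · exact hcs_of_zero_imp hψcs (fun x h0 => by simp [h0])
  have I7 : Integrable (fun x : Fin 3 → ℝ => ((laplS φ x : ℝ) : ℂ) * ψ x ^ 2) volume := by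
    apply Continuous.integrable_of_hasCompactSupport
    · fun_prop
    · exact hcs_of_zero_imp hψs (fun x h0 => by simp [h0])
  have I8 : Integrable (fun x : Fin 3 → ℝ => ((laplS φ x : ℝ) : ℂ) * ψc x ^ 2) volume := by
    apply Continuous.integrable_of_hasCompactSupport
    · fun_prop
    · exact hcs_of_zero_imp hψcs (fun x h0 => by simp [h0])
  have I9 : Integrable (fun x : Fin 3 → ℝ => ((φ x : ℝ) : ℂ) * (ψ x * laplS ψ x)) volume := by
    apply Continuous.integrable_of_hasCompactSupport
    · fun_prop
    · exact hcs_of_zero_imp hψs (fun x h0 => by simp [h0])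
  have I10 : Integrable (fun x : Fin 3 → ℝ => ((φ x : ℝ) : ℂ) * (ψc x * laplS ψc x)) volume := by
    apply Continuous.integrable_of_hasCompactSupport
    · fun_prop
    · exact hcs_of_zero_imp hψcs (fun x h0 => by simp [h0])
  have I11 : Integrable (fun x : Fin 3 → ℝ => ((φ x : ℝ) : ℂ) ^ 2 * ψ x ^ 2) volume := by
    apply Continuous.integrable_of_hasCompactSupport
    · fun_prop
    · exact hcs_of_zero_imp hψs (fun x h0 => by simp [h0])
  have I12 : Integrable (fun x : Fin 3 → ℝ => ((φ x : ℝ) : ℂ) ^ 2 * ψc x ^ 2) volume := by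
    apply Continuous.integrable_of_hasCompactSupport
    · fun_prop
    · exact hcs_of_zero_imp hψcs (fun x h0 => by simp [h0])
  have I13 : Integrable (fun x : Fin 3 → ℝ => ((pφ x : ℝ) : ℂ) * (ψ x * laplS ψ x)) volume := by
    apply Continuous.integrable_of_hasCompactSupport
    · fun_prop
    · exact hcs_of_zero_imp hψs (fun x h0 => by simp [h0])
  have I14 : Integrable (fun x : Fin 3 → ℝ => ((pφ x : ℝ) : ℂ) * (ψc x * laplS ψc x)) volume := by
    apply Continuous.integrable_of_hasCompactSupport
    · fun_prop
    · exact hcs_of_zero_imp hψcs (fun x h0 => by simp [h0])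
  have I15 : Integrable (fun x : Fin 3 → ℝ => ((φ x : ℝ) : ℂ) * ((pφ x : ℝ) : ℂ) * ψ x ^ 2) volume := by
    apply Continuous.integrable_of_hasCompactSupport
    · fun_prop
    · exact hcs_of_zero_imp hψs (fun x h0 => by simp [h0])
  have I16 : Integrable (fun x : Fin 3 → ℝ => ((φ x : ℝ) : ℂ) * ((pφ x : ℝ) : ℂ) * ψc x ^ 2) volume := by
    apply Continuous.integrable_of_hasCompactSupport
    · fun_prop
    · exact hcs_of_zero_imp hψcs (fun x h0 => by simp [h0])
  have I17 : Integrable (fun x : Fin 3 → ℝ => ((pφ x : ℝ) : ℂ) ^ 2 * ψ x ^ 2) volume := by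
    apply Continuous.integrable_of_hasCompactSupport
    · fun_prop
    · exact hcs_of_zero_imp hψs (fun x h0 => by simp [h0])
  have I18 : Integrable (fun x : Fin 3 → ℝ => ((pφ x : ℝ) : ℂ) ^ 2 * ψc x ^ 2) volume := by
    apply Continuous.integrable_of_hasCompactSupport
    · fun_prop
    · exact hcs_of_zero_imp hψcs (fun x h0 => by simp [h0])
  have I19 : Integrable (fun x : Fin 3 → ℝ => ((laplS pφ x : ℝ) : ℂ) * ψ x ^ 2) volume := by
    apply Continuous.integrable_of_hasCompactSupport
    · fun_prop
    · exact hcs_of_zero_imp hψs (fun x h0 => by simp [h0])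
  have I20 : Integrable (fun x : Fin 3 → ℝ => ((laplS pφ x : ℝ) : ℂ) * ψc x ^ 2) volume := by
    apply Continuous.integrable_of_hasCompactSupport
    · fun_prop
    · exact hcs_of_zero_imp hψcs (fun x h0 => by simp [h0])
  set e1 := Complex.exp (-(Complex.I * s)) with he1
  set e2 := Complex.exp (Complex.I * s) with he2
  have h12 : e1 * e2 = 1 := by
    rw [he1, he2, ← Complex.exp_add]; simp
  have q1 : Complex.exp ((-2 : ℂ) * Complex.I * s) = e1 ^ 2 := by
    rw [he1, ← Complex.exp_nat_mul]; congr 1; push_cast; ring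
  have q2 : Complex.exp ((2 : ℂ) * Complex.I * s) = e2 ^ 2 := by
    rw [he2, ← Complex.exp_nat_mul]; congr 1; push_cast; ring
  have q3 : Complex.exp ((-4 : ℂ) * Complex.I * s) = e1 ^ 4 := by
    rw [he1, ← Complex.exp_nat_mul]; congr 1; push_cast; ring
  have q4 : Complex.exp ((4 : ℂ) * Complex.I * s) = e2 ^ 4 := by
    rw [he2, ← Complex.exp_nat_mul]; congr 1; push_cast; ring
  unfold G2
  simp only [laplS_const_mul]
  have R1 : (∫ x : Fin 3 → ℝ, ((e1 * laplS ψ x) ^ 2 - (e2 * laplS ψc x) ^ 2)) = ∫ x : Fin 3 → ℝ, (e1 ^ 2 * ((laplS ψ x) ^ 2) - e2 ^ 2 * ((laplS ψc x) ^ 2)) := by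
    congr 1; funext x; ring
  rw [R1, split_sub _ _ I1 I2]
  have R2 : (∫ x : Fin 3 → ℝ, (e1 * ψ x * (e2 * ψc x) * ((e1 * ψ x) ^ 2 - (e2 * ψc x) ^ 2))) = ∫ x : Fin 3 → ℝ, (e1 ^ 2 * (ψ x ^ 3 * ψc x) - e2 ^ 2 * (ψ x * ψc x ^ 3)) := by
    congr 1; funext x; linear_combination (e1 ^ 2 * (ψ x ^ 3 * ψc x) - e2 ^ 2 * (ψ x * ψc x ^ 3)) * h12
  rw [R2, split_sub _ _ I3 I4]
  have R3 : (∫ x : Fin 3 → ℝ, ((e1 * ψ x) ^ 4 - (e2 * ψc x) ^ 4)) = ∫ x : Fin 3 → ℝ, (e1 ^ 4 * (ψ x ^ 4) - e2 ^ 4 * (ψc x ^ 4)) := by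
    congr 1; funext x; ring
  rw [R3, split_sub _ _ I5 I6]
  have R4 : (∫ x : Fin 3 → ℝ, (((laplS φ x : ℝ) : ℂ) * ((e1 * ψ x) ^ 2 - (e2 * ψc x) ^ 2))) = ∫ x : Fin 3 → ℝ, (e1 ^ 2 * (((laplS φ x : ℝ) : ℂ) * ψ x ^ 2) - e2 ^ 2 * (((laplS φ x : ℝ) : ℂ) * ψc x ^ 2)) := by
    congr 1; funext x; ring
  rw [R4, split_sub _ _ I7 I8]
  have R5 : (∫ x : Fin 3 → ℝ, (((φ x : ℝ) : ℂ) * (e1 * ψ x * (e1 * laplS ψ x) - e2 * ψc x * (e2 * laplS ψc x)))) = ∫ x : Fin 3 → ℝ, (e1 ^ 2 * (((φ x : ℝ) : ℂ) * (ψ x * laplS ψ x)) - e2 ^ 2 * (((φ x : ℝ) : ℂ) * (ψc x * laplS ψc x))) := by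
    congr 1; funext x; ring
  rw [R5, split_sub _ _ I9 I10]
  have R6 : (∫ x : Fin 3 → ℝ, (((φ x : ℝ) : ℂ) ^ 2 * ((e1 * ψ x) ^ 2 - (e2 * ψc x) ^ 2))) = ∫ x : Fin 3 → ℝ, (e1 ^ 2 * (((φ x : ℝ) : ℂ) ^ 2 * ψ x ^ 2) - e2 ^ 2 * (((φ x : ℝ) : ℂ) ^ 2 * ψc x ^ 2)) := by
    congr 1; funext x; ring
  rw [R6, split_sub _ _ I11 I12]
  have R7 : (∫ x : Fin 3 → ℝ, (((pφ x : ℝ) : ℂ) * (e1 * ψ x * (e1 * laplS ψ x) + e2 * ψc x * (e2 * laplS ψc x)))) = ∫ x : Fin 3 → ℝ, (e1 ^ 2 * (((pφ x : ℝ) : ℂ) * (ψ x * laplS ψ x)) + e2 ^ 2 * (((pφ x : ℝ) : ℂ) * (ψc x * laplS ψc x))) := by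
    congr 1; funext x; ring
  rw [R7, split_add _ _ I13 I14]
  have R8 : (∫ x : Fin 3 → ℝ, (((φ x : ℝ) : ℂ) * ((pφ x : ℝ) : ℂ) * ((e1 * ψ x) ^ 2 + (e2 * ψc x) ^ 2))) = ∫ x : Fin 3 → ℝ, (e1 ^ 2 * (((φ x : ℝ) : ℂ) * ((pφ x : ℝ) : ℂ) * ψ x ^ 2) + e2 ^ 2 * (((φ x : ℝ) : ℂ) * ((pφ x : ℝ) : ℂ) * ψc x ^ 2)) := by
    congr 1; funext x; ring
  rw [R8, split_add _ _ I15 I16]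
  have R9 : (∫ x : Fin 3 → ℝ, (((pφ x : ℝ) : ℂ) ^ 2 * ((e1 * ψ x) ^ 2 - (e2 * ψc x) ^ 2))) = ∫ x : Fin 3 → ℝ, (e1 ^ 2 * (((pφ x : ℝ) : ℂ) ^ 2 * ψ x ^ 2) - e2 ^ 2 * (((pφ x : ℝ) : ℂ) ^ 2 * ψc x ^ 2)) := by
    congr 1; funext x; ring
  rw [R9, split_sub _ _ I17 I18]
  have R10 : (∫ x : Fin 3 → ℝ, (((laplS pφ x : ℝ) : ℂ) * ((e1 * ψ x) ^ 2 + (e2 * ψc x) ^ 2))) = ∫ x : Fin 3 → ℝ, (e1 ^ 2 * (((laplS pφ x : ℝ) : ℂ) * ψ x ^ 2) + e2 ^ 2 * (((laplS pφ x : ℝ) : ℂ) * ψc x ^ 2)) := by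
    congr 1; funext x; ring
  rw [R10, split_add _ _ I19 I20]
  rw [q1, q2, q3, q4]
  unfold cA cB cC cD
  ring


/-- the time average of G₂ along the harmonic-oscillator flow vanishes. -/
theorem G2_average_zero
    (ψ : (Fin 3 → ℝ) → ℂ) (φ pφ : (Fin 3 → ℝ) → ℝ)
    (hψ : ContDiff ℝ (⊤ : ℕ∞) ψ) (hφ : ContDiff ℝ (⊤ : ℕ∞) φ) (hpφ : ContDiff ℝ (⊤ : ℕ∞) pφ)
    (hψs : HasCompactSupport ψ) (hφs : HasCompactSupport φ) (hpφs : HasCompactSupport pφ) :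
    (1 / (2 * Real.pi) : ℂ) *
      ∫ s in (0 : ℝ)..(2 * Real.pi),
        G2 (fun x => Complex.exp (-(Complex.I * s)) * ψ x)
           (fun x => Complex.exp (Complex.I * s) * (starRingEnd ℂ) (ψ x)) φ pφ
    = 0 := by
  have hψc : ContDiff ℝ (⊤ : ℕ∞) (fun x => (starRingEnd ℂ) (ψ x)) :=
    Complex.conjCLE.contDiff.comp hψ
  have hψcs : HasCompactSupport (fun x => (starRingEnd ℂ) (ψ x)) :=
    hψs.comp_left (g := starRingEnd ℂ) (map_zero _)
  have hkey := G2_flow ψ (fun x => (starRingEnd ℂ) (ψ x)) φ pφ hψ hψc hφ hpφ hψs hψcs hφs hpφs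
  have hc : (∫ s in (0 : ℝ)..(2 * Real.pi),
        G2 (fun x => Complex.exp (-(Complex.I * s)) * ψ x)
           (fun x => Complex.exp (Complex.I * s) * (starRingEnd ℂ) (ψ x)) φ pφ)
      = ∫ s in (0 : ℝ)..(2 * Real.pi),
        (Complex.exp ((-2 : ℂ) * Complex.I * s) * cA ψ (fun x => (starRingEnd ℂ) (ψ x)) φ pφ
         + Complex.exp ((2 : ℂ) * Complex.I * s) * cB ψ (fun x => (starRingEnd ℂ) (ψ x)) φ pφ
         + Complex.exp ((-4 : ℂ) * Complex.I * s) * cC ψ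
         + Complex.exp ((4 : ℂ) * Complex.I * s) * cD (fun x => (starRingEnd ℂ) (ψ x))) :=
    intervalIntegral.integral_congr (fun s _ => hkey s)
  have ii : ∀ c K : ℂ, IntervalIntegrable (fun s : ℝ => Complex.exp (c * Complex.I * s) * K)
      volume 0 (2 * Real.pi) := by
    intro c K
    apply Continuous.intervalIntegrable
    fun_prop
  have havg : ∀ (n : ℤ), n ≠ 0 → ∀ K : ℂ,
      (∫ s in (0:ℝ)..(2*Real.pi), Complex.exp ((n : ℂ) * Complex.I * s) * K) = 0 := by
    intro n hn K
    rw [intervalIntegral.integral_mul_const, exp_avg n hn, zero_mul]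
  have main : (∫ s in (0 : ℝ)..(2 * Real.pi),
        (Complex.exp ((-2 : ℂ) * Complex.I * s) * cA ψ (fun x => (starRingEnd ℂ) (ψ x)) φ pφ
         + Complex.exp ((2 : ℂ) * Complex.I * s) * cB ψ (fun x => (starRingEnd ℂ) (ψ x)) φ pφ
         + Complex.exp ((-4 : ℂ) * Complex.I * s) * cC ψ
         + Complex.exp ((4 : ℂ) * Complex.I * s) * cD (fun x => (starRingEnd ℂ) (ψ x)))) = 0 := by
    rw [intervalIntegral.integral_add (((ii _ _).add (ii _ _)).add (ii _ _)) (ii _ _),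
        intervalIntegral.integral_add ((ii _ _).add (ii _ _)) (ii _ _),
        intervalIntegral.integral_add (ii _ _) (ii _ _)]
    have a1 := havg (-2) (by norm_num) (cA ψ (fun x => (starRingEnd ℂ) (ψ x)) φ pφ)
    have a2 := havg 2 (by norm_num) (cB ψ (fun x => (starRingEnd ℂ) (ψ x)) φ pφ)
    have a3 := havg (-4) (by norm_num) (cC ψ)
    have a4 := havg 4 (by norm_num) (cD (fun x => (starRingEnd ℂ) (ψ x)))
    push_cast at a1 a2 a3 a4
    rw [a1, a2, a3, a4]
    ring
  rw [hc, main, mul_zero]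
end
end

section
/- Let ε > 0, let Ψ : ℝ×ℝ³ → ℂ and φ, p_φ : ℝ×ℝ³ → ℝ be smooth, and suppose there is a compact set K ⊆ ℝ³ such that Ψ(T,x) = 0 whenever x ∉ K. If Ψ satisfies the second-order truncated normal-form Schrödinger-type equation i∂_TΨ = −(1/2)ΔΨ + φΨ + ε[ −(1/8)Δ(ΔΨ) + (1/4)(φ·ΔΨ + Δ(φΨ)) + (i/16)(p_φ·ΔΨ − Δ(p_φΨ)) − (1/2)φ²Ψ + (1/8)|Ψ|²Ψ ] at every point, then the function T ↦ ∫_{ℝ³} |Ψ(T,x)|² dx is constant on ℝ. -/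
noncomputable section

open MeasureTheory

open Complex
open scoped ComplexConjugate

abbrev E3 := Fin 3 → ℝ

def ee (i : Fin 3) : E3 := Pi.single i 1

def pd (i : Fin 3) (f : E3 → ℂ) (x : E3) : ℂ :=
  deriv (fun y => f (Function.update x i y)) (x i)

def lap (f : E3 → ℂ) (x : E3) : ℂ := ∑ i : Fin 3, pd i (pd i f) x

lemma hasDerivAt_update' (x : E3) (i : Fin 3) (t : ℝ) :
    HasDerivAt (fun y => Function.update x i y) (ee i) t := by
  have h : (fun y : ℝ => Function.update x i y)
      = fun y : ℝ => x + (y - x i) • ee i := by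
    funext y; funext j
    by_cases hj : j = i
    · subst hj; simp [ee, Function.update_self]
    · simp [ee, Function.update_of_ne hj, Pi.single_eq_of_ne hj]
  rw [h]
  simpa using (((hasDerivAt_id t).sub_const (x i)).smul_const (ee i)).const_add x

lemma hasDerivAt_comp_update {f : E3 → ℂ} {x : E3} {i : Fin 3} {t : ℝ}
    (hf : DifferentiableAt ℝ f (Function.update x i t)) :
    HasDerivAt (fun y => f (Function.update x i y))
      (fderiv ℝ f (Function.update x i t) (ee i)) t :=
  hf.hasFDerivAt.comp_hasDerivAt t (hasDerivAt_update' x i t)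

lemma pd_eq_fderiv {f : E3 → ℂ} {i : Fin 3} {x : E3}
    (hf : DifferentiableAt ℝ f x) : pd i f x = fderiv ℝ f x (ee i) := by
  have h := hasDerivAt_comp_update (f := f) (x := x) (i := i) (t := x i)
      (by rwa [Function.update_eq_self])
  rw [Function.update_eq_self] at h
  exact h.deriv

lemma pd_contDiff {f : E3 → ℂ} (hf : ContDiff ℝ (⊤ : ℕ∞) f) (i : Fin 3) :
    ContDiff ℝ (⊤ : ℕ∞) (pd i f) := by
  have h : pd i f = fun x => (ContinuousLinearMap.apply ℝ ℂ (ee i)) (fderiv ℝ f x) :=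
    funext fun x => pd_eq_fderiv (hf.differentiable (by simp) x)
  rw [h]
  exact (ContinuousLinearMap.apply ℝ ℂ (ee i)).contDiff.comp (hf.fderiv_right (by simp))

lemma lap_contDiff {f : E3 → ℂ} (hf : ContDiff ℝ (⊤ : ℕ∞) f) : ContDiff ℝ (⊤ : ℕ∞) (lap f) := by
  have : lap f = fun x => ∑ i : Fin 3, pd i (pd i f) x := rfl
  rw [this]
  exact ContDiff.sum fun i _ => pd_contDiff (pd_contDiff hf i) i

lemma pd_zero_of {K : Set E3} (hK : IsCompact K) {f : E3 → ℂ}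
    (hf : Differentiable ℝ f) (h0 : ∀ x ∉ K, f x = 0) :
    ∀ x ∉ K, ∀ i, pd i f x = 0 := by
  intro x hx i
  rw [pd_eq_fderiv (hf x)]
  have hev : f =ᶠ[nhds x] (fun _ => 0) := by
    filter_upwards [hK.isClosed.isOpen_compl.mem_nhds hx] with y hy
    exact h0 y hy
  rw [hev.fderiv_eq, fderiv_fun_const]
  simp

lemma lap_zero_of {K : Set E3} (hK : IsCompact K) {f : E3 → ℂ}
    (hf : ContDiff ℝ (⊤ : ℕ∞) f) (h0 : ∀ x ∉ K, f x = 0) :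
    ∀ x ∉ K, lap f x = 0 := by
  intro x hx
  have : ∀ i : Fin 3, pd i (pd i f) x = 0 := fun i =>
    pd_zero_of hK ((pd_contDiff hf i).differentiable (by simp))
      (fun y hy => pd_zero_of hK (hf.differentiable (by simp)) h0 y hy i) x hx i
  simp [lap, this]

lemma pd_conj {f : E3 → ℂ} (hf : ContDiff ℝ (⊤ : ℕ∞) f) (i : Fin 3) :
    pd i (fun x => conj (f x)) = fun x => conj (pd i f x) := by
  funext x
  have hd : HasDerivAt (fun y => f (Function.update x i y)) (pd i f x) (x i) := by
    have h := hasDerivAt_comp_update (f := f) (x := x) (i := i) (t := x i)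
        (by rw [Function.update_eq_self]; exact (hf.differentiable (by simp)) x)
    rw [Function.update_eq_self] at h
    rw [pd_eq_fderiv ((hf.differentiable (by simp)) x)]
    exact h
  have hc : HasDerivAt (fun y => conj (f (Function.update x i y))) (conj (pd i f x)) (x i) := by
    have := (Complex.conjCLE.toContinuousLinearMap.hasFDerivAt).comp_hasDerivAt (x i) hd
    exact this
  exact hc.deriv

lemma lap_conj {f : E3 → ℂ} (hf : ContDiff ℝ (⊤ : ℕ∞) f) :
    lap (fun x => conj (f x)) = fun x => conj (lap f x) := by
  funext x
  have h : ∀ i : Fin 3, pd i (pd i fun x => conj (f x)) x = conj (pd i (pd i f) x) := by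
    intro i
    rw [pd_conj hf i, pd_conj (pd_contDiff hf i) i]
  simp only [lap, h, ← map_sum]

lemma integ_cs {K : Set E3} (hK : IsCompact K) {f : E3 → ℂ}
    (hf : Continuous f) (h0 : ∀ x ∉ K, f x = 0) : Integrable f :=
  hf.integrable_of_hasCompactSupport (HasCompactSupport.intro hK h0)

lemma ibp_pd {K : Set E3} (hK : IsCompact K) {f g : E3 → ℂ}
    (hf : ContDiff ℝ (⊤ : ℕ∞) f) (hg : ContDiff ℝ (⊤ : ℕ∞) g)
    (hf0 : ∀ x ∉ K, f x = 0) (hg0 : ∀ x ∉ K, g x = 0) (i : Fin 3) :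
    ∫ x, f x * pd i g x = - ∫ x, pd i f x * g x := by
  have hpf : pd i f = fun x => fderiv ℝ f x (ee i) :=
    funext fun x => pd_eq_fderiv (hf.differentiable (by simp) x)
  have hpg : pd i g = fun x => fderiv ℝ g x (ee i) :=
    funext fun x => pd_eq_fderiv (hg.differentiable (by simp) x)
  have hpf' : ∀ x, fderiv ℝ f x (ee i) = pd i f x := fun x =>
    (pd_eq_fderiv (hf.differentiable (by simp) x)).symm
  have hpg' : ∀ x, fderiv ℝ g x (ee i) = pd i g x := fun x =>
    (pd_eq_fderiv (hg.differentiable (by simp) x)).symm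
  have h1 : Integrable (fun x => fderiv ℝ f x (ee i) * g x) := by
    simp only [hpf']
    exact integ_cs hK (((pd_contDiff hf i).continuous).mul hg.continuous)
      (fun x hx => by simp [hg0 x hx])
  have h2 : Integrable (fun x => f x * fderiv ℝ g x (ee i)) := by
    simp only [hpg']
    exact integ_cs hK (hf.continuous.mul ((pd_contDiff hg i).continuous))
      (fun x hx => by simp [hf0 x hx])
  have h3 : Integrable (fun x => f x * g x) :=
    integ_cs hK (hf.continuous.mul hg.continuous) (fun x hx => by simp [hf0 x hx])
  rw [hpf, hpg]
  exact integral_mul_fderiv_eq_neg_fderiv_mul_of_integrable h1 h2 h3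
    (fun x _ => hf.differentiable (by simp) x) (fun x _ => hg.differentiable (by simp) x)

lemma ibp_lap {K : Set E3} (hK : IsCompact K) {f g : E3 → ℂ}
    (hf : ContDiff ℝ (⊤ : ℕ∞) f) (hg : ContDiff ℝ (⊤ : ℕ∞) g)
    (hf0 : ∀ x ∉ K, f x = 0) (hg0 : ∀ x ∉ K, g x = 0) :
    ∫ x, f x * lap g x = ∫ x, lap f x * g x := by
  have hint : ∀ (u v : E3 → ℂ), ContDiff ℝ (⊤ : ℕ∞) u → ContDiff ℝ (⊤ : ℕ∞) v → (∀ x ∉ K, u x = 0) →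
      Integrable (fun x => u x * v x) := fun u v hu hv hu0 =>
    integ_cs hK (hu.continuous.mul hv.continuous) (fun x hx => by simp [hu0 x hx])
  have pds : ∀ (u : E3 → ℂ), ContDiff ℝ (⊤ : ℕ∞) u → (∀ x ∉ K, u x = 0) →
      ∀ i : Fin 3, (∀ x ∉ K, pd i u x = 0) := fun u hu hu0 i x hx =>
    pd_zero_of hK (hu.differentiable (by simp)) hu0 x hx i
  calc ∫ x, f x * lap g x
      = ∑ i : Fin 3, ∫ x, f x * pd i (pd i g) x := by
        rw [← integral_finset_sum]
        · simp only [lap, Finset.mul_sum]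
        · exact fun i _ => hint f _ hf (pd_contDiff (pd_contDiff hg i) i) hf0
    _ = ∑ i : Fin 3, ∫ x, pd i (pd i f) x * g x := by
        refine Finset.sum_congr rfl fun i _ => ?_
        rw [ibp_pd hK hf (pd_contDiff hg i) hf0 (pds g hg hg0 i) i,
          ibp_pd hK (pd_contDiff hf i) hg (pds f hf hf0 i) hg0 i, neg_neg]
    _ = ∫ x, lap f x * g x := by
        rw [← integral_finset_sum]
        · simp only [lap, Finset.sum_mul]
        · exact fun i _ => hint _ g (pd_contDiff (pd_contDiff hf i) i) hg
            (fun x hx => pds _ (pd_contDiff hf i) (pds f hf hf0 i) i x hx)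

lemma key_lemma {K : Set E3} (hK : IsCompact K) (ε : ℝ) {u F Q : E3 → ℂ}
    (hu : ContDiff ℝ (⊤ : ℕ∞) u) (hF : ContDiff ℝ (⊤ : ℕ∞) F) (hQ : ContDiff ℝ (⊤ : ℕ∞) Q)
    (hu0 : ∀ x ∉ K, u x = 0)
    (hFr : ∀ x, conj (F x) = F x) (hQr : ∀ x, conj (Q x) = Q x) :
    ∫ x : E3, ((-(1 / 2 : ℂ) * lap u x + F x * u x
      + (ε : ℂ) * (-(1 / 8 : ℂ) * lap (lap u) x
        + (1 / 4 : ℂ) * (F x * lap u x + lap (fun y => F y * u y) x)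
        + (Complex.I / 16) * (Q x * lap u x - lap (fun y => Q y * u y) x)
        - (1 / 2 : ℂ) * F x ^ 2 * u x
        + (1 / 8 : ℂ) * (Complex.normSq (u x) : ℂ) * u x)) * conj (u x)).im = 0 := by
  classical
  set c : E3 → ℂ := fun x => conj (u x) with hc_def
  have hc : ContDiff ℝ (⊤ : ℕ∞) c := Complex.conjCLE.toContinuousLinearMap.contDiff.comp hu
  have hc0 : ∀ x ∉ K, c x = 0 := fun x hx => by simp [hc_def, hu0 x hx]
  have hcu : ∀ x, conj (c x) = u x := fun x => Complex.conj_conj (u x)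
  have hFu : ContDiff ℝ (⊤ : ℕ∞) (fun y => F y * u y) := hF.mul hu
  have hQu : ContDiff ℝ (⊤ : ℕ∞) (fun y => Q y * u y) := hQ.mul hu
  have hFu0 : ∀ x ∉ K, F x * u x = 0 := fun x hx => by simp [hu0 x hx]
  have hQu0 : ∀ x ∉ K, Q x * u x = 0 := fun x hx => by simp [hu0 x hx]
  have hlapu := lap_contDiff hu
  have hlapu0 := lap_zero_of hK hu hu0
  have hlapc := lap_contDiff hc
  -- conj commutes with lap of u
  have hlapcu : ∀ x, conj (lap u x) = lap c x := fun x => congrFun (lap_conj hu).symm x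
  -- the nine basic integrals
  set I1 : ℂ := ∫ x : E3, lap u x * c x with hI1
  set I2 : ℂ := ∫ x : E3, F x * u x * c x with hI2
  set I3 : ℂ := ∫ x : E3, lap (lap u) x * c x with hI3
  set I4 : ℂ := ∫ x : E3, F x * lap u x * c x with hI4
  set I5 : ℂ := ∫ x : E3, lap (fun y => F y * u y) x * c x with hI5
  set I6 : ℂ := ∫ x : E3, Q x * lap u x * c x with hI6
  set I7 : ℂ := ∫ x : E3, lap (fun y => Q y * u y) x * c x with hI7
  set I8 : ℂ := ∫ x : E3, F x ^ 2 * u x * c x with hI8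
  set I9 : ℂ := ∫ x : E3, (Complex.normSq (u x) : ℂ) * u x * c x with hI9
  -- integrability of anything times c
  have hint : ∀ h : E3 → ℂ, Continuous h → Integrable (fun x => h x * c x) := fun h hh =>
    integ_cs hK (hh.mul hc.continuous) (fun x hx => by simp [hc0 x hx])
  -- conjugation identities
  have hconj1 : conj I1 = I1 := by
    rw [hI1, ← integral_conj]
    have : (fun x => conj (lap u x * c x)) = fun x => u x * lap c x := by
      funext x; rw [map_mul, hlapcu, hcu]; ring
    rw [this, ibp_lap hK hu hc hu0 hc0]
  have hconj2 : conj I2 = I2 := by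
    rw [hI2, ← integral_conj]
    refine integral_congr_ae (Filter.Eventually.of_forall fun x => ?_)
    simp only [map_mul, hFr, hcu, hc_def, Complex.conj_conj]
    ring
  have hI3' : I3 = ∫ x : E3, lap u x * lap c x := by
    rw [hI3, ← ibp_lap hK hlapu hc hlapu0 hc0]
  have hconj3 : conj I3 = I3 := by
    rw [hI3', ← integral_conj]
    have : (fun x => conj (lap u x * lap c x)) = fun x => lap u x * lap c x := by
      funext x
      rw [map_mul, hlapcu]
      have : conj (lap c x) = lap u x := by
        rw [← hlapcu x, Complex.conj_conj]
      rw [this]; ring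
    rw [this]
  have hI5' : I5 = ∫ x : E3, F x * u x * lap c x := by
    rw [hI5, ← ibp_lap hK hFu hc hFu0 hc0]
  have hconj4 : conj I4 = I5 := by
    rw [hI4, ← integral_conj, hI5']
    refine integral_congr_ae (Filter.Eventually.of_forall fun x => ?_)
    simp only [map_mul, hFr, hcu, hlapcu]
    ring
  have hconj5 : conj I5 = I4 := by rw [← hconj4, Complex.conj_conj]
  have hI7' : I7 = ∫ x : E3, Q x * u x * lap c x := by
    rw [hI7, ← ibp_lap hK hQu hc hQu0 hc0]
  have hconj6 : conj I6 = I7 := by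
    rw [hI6, ← integral_conj, hI7']
    refine integral_congr_ae (Filter.Eventually.of_forall fun x => ?_)
    simp only [map_mul, hQr, hcu, hlapcu]
    ring
  have hconj7 : conj I7 = I6 := by rw [← hconj6, Complex.conj_conj]
  have hconj8 : conj I8 = I8 := by
    rw [hI8, ← integral_conj]
    refine integral_congr_ae (Filter.Eventually.of_forall fun x => ?_)
    simp only [map_mul, map_pow, hFr, hcu, hc_def, Complex.conj_conj]
    ring
  have hconj9 : conj I9 = I9 := by
    rw [hI9, ← integral_conj]
    refine integral_congr_ae (Filter.Eventually.of_forall fun x => ?_)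
    simp only [map_mul, hcu, hc_def, Complex.conj_ofReal, Complex.conj_conj]
    ring
  -- integrability of the individual pieces
  have ig1 : Integrable (fun x => lap u x * c x) := hint _ hlapu.continuous
  have ig2 : Integrable (fun x => F x * u x * c x) := hint _ (hF.continuous.mul hu.continuous)
  have ig3 : Integrable (fun x => lap (lap u) x * c x) := hint _ (lap_contDiff hlapu).continuous
  have ig4 : Integrable (fun x => F x * lap u x * c x) :=
    hint _ (hF.continuous.mul hlapu.continuous)
  have ig5 : Integrable (fun x => lap (fun y => F y * u y) x * c x) :=
    hint _ (lap_contDiff hFu).continuous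
  have ig6 : Integrable (fun x => Q x * lap u x * c x) :=
    hint _ (hQ.continuous.mul hlapu.continuous)
  have ig7 : Integrable (fun x => lap (fun y => Q y * u y) x * c x) :=
    hint _ (lap_contDiff hQu).continuous
  have ig8 : Integrable (fun x => F x ^ 2 * u x * c x) :=
    hint _ ((hF.continuous.pow 2).mul hu.continuous)
  have ig9 : Integrable (fun x => (Complex.normSq (u x) : ℂ) * u x * c x) :=
    hint _ ((Complex.continuous_ofReal.comp (Complex.continuous_normSq.comp hu.continuous)).mul
      hu.continuous)
  -- pointwise rearrangement
  have hfun : (fun x : E3 => ((-(1 / 2 : ℂ) * lap u x + F x * u x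
      + (ε : ℂ) * (-(1 / 8 : ℂ) * lap (lap u) x
        + (1 / 4 : ℂ) * (F x * lap u x + lap (fun y => F y * u y) x)
        + (Complex.I / 16) * (Q x * lap u x - lap (fun y => Q y * u y) x)
        - (1 / 2 : ℂ) * F x ^ 2 * u x
        + (1 / 8 : ℂ) * (Complex.normSq (u x) : ℂ) * u x)) * conj (u x)))
      = fun x : E3 =>
        (-(1 / 2 : ℂ)) * (lap u x * c x) + ((F x * u x * c x) +
        (ε : ℂ) * ((-(1 / 8 : ℂ)) * (lap (lap u) x * c x)
          + ((1 / 4 : ℂ) * ((F x * lap u x * c x) + (lap (fun y => F y * u y) x * c x))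
          + ((Complex.I / 16) * ((Q x * lap u x * c x) - (lap (fun y => Q y * u y) x * c x))
          + ((-(1 / 2 : ℂ)) * (F x ^ 2 * u x * c x)
          + (1 / 8 : ℂ) * ((Complex.normSq (u x) : ℂ) * u x * c x)))))) := by
    funext x
    simp only [hc_def]
    ring
  have icomb : Integrable (fun x : E3 =>
        (-(1 / 2 : ℂ)) * (lap u x * c x) + ((F x * u x * c x) +
        (ε : ℂ) * ((-(1 / 8 : ℂ)) * (lap (lap u) x * c x)
          + ((1 / 4 : ℂ) * ((F x * lap u x * c x) + (lap (fun y => F y * u y) x * c x))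
          + ((Complex.I / 16) * ((Q x * lap u x * c x) - (lap (fun y => Q y * u y) x * c x))
          + ((-(1 / 2 : ℂ)) * (F x ^ 2 * u x * c x)
          + (1 / 8 : ℂ) * ((Complex.normSq (u x) : ℂ) * u x * c x))))))) :=
    (ig1.const_mul _).add
      (ig2.add (((((ig3.const_mul _).add (((ig4.add ig5).const_mul _).add
        ((((ig6.sub ig7).const_mul _)).add (((ig8.const_mul _).add
          (ig9.const_mul _))))))).const_mul _)))
  -- split the big integral
  have hsplit :
      (∫ x : E3, ((-(1 / 2 : ℂ) * lap u x + F x * u x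
        + (ε : ℂ) * (-(1 / 8 : ℂ) * lap (lap u) x
          + (1 / 4 : ℂ) * (F x * lap u x + lap (fun y => F y * u y) x)
          + (Complex.I / 16) * (Q x * lap u x - lap (fun y => Q y * u y) x)
          - (1 / 2 : ℂ) * F x ^ 2 * u x
          + (1 / 8 : ℂ) * (Complex.normSq (u x) : ℂ) * u x)) * conj (u x)))
      = -(1 / 2 : ℂ) * I1 + I2 + (ε : ℂ) * (-(1 / 8 : ℂ) * I3
          + (1 / 4 : ℂ) * (I4 + I5) + (Complex.I / 16) * (I6 - I7)
          - (1 / 2 : ℂ) * I8 + (1 / 8 : ℂ) * I9) := by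
    have hA4 : Integrable (fun x => F x * lap u x * c x
        + lap (fun y => F y * u y) x * c x) := ig4.add ig5
    have hA6 : Integrable (fun x => Q x * lap u x * c x
        - lap (fun y => Q y * u y) x * c x) := ig6.sub ig7
    have hB5 : Integrable (fun x => (-(1 / 2 : ℂ)) * (F x ^ 2 * u x * c x)
        + (1 / 8 : ℂ) * ((Complex.normSq (u x) : ℂ) * u x * c x)) :=
      (ig8.const_mul _).add (ig9.const_mul _)
    have hB4 : Integrable (fun x => (Complex.I / 16) * ((Q x * lap u x * c x)
        - (lap (fun y => Q y * u y) x * c x)) + ((-(1 / 2 : ℂ)) * (F x ^ 2 * u x * c x)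
        + (1 / 8 : ℂ) * ((Complex.normSq (u x) : ℂ) * u x * c x))) :=
      (hA6.const_mul _).add hB5
    have hB3 : Integrable (fun x => (1 / 4 : ℂ) * ((F x * lap u x * c x)
        + (lap (fun y => F y * u y) x * c x))
        + ((Complex.I / 16) * ((Q x * lap u x * c x) - (lap (fun y => Q y * u y) x * c x))
        + ((-(1 / 2 : ℂ)) * (F x ^ 2 * u x * c x)
        + (1 / 8 : ℂ) * ((Complex.normSq (u x) : ℂ) * u x * c x)))) :=
      (hA4.const_mul _).add hB4
    have hB2 : Integrable (fun x => (-(1 / 8 : ℂ)) * (lap (lap u) x * c x)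
        + ((1 / 4 : ℂ) * ((F x * lap u x * c x) + (lap (fun y => F y * u y) x * c x))
        + ((Complex.I / 16) * ((Q x * lap u x * c x) - (lap (fun y => Q y * u y) x * c x))
        + ((-(1 / 2 : ℂ)) * (F x ^ 2 * u x * c x)
        + (1 / 8 : ℂ) * ((Complex.normSq (u x) : ℂ) * u x * c x))))) :=
      (ig3.const_mul _).add hB3
    have hB1 : Integrable (fun x => (ε : ℂ) * ((-(1 / 8 : ℂ)) * (lap (lap u) x * c x)
        + ((1 / 4 : ℂ) * ((F x * lap u x * c x) + (lap (fun y => F y * u y) x * c x))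
        + ((Complex.I / 16) * ((Q x * lap u x * c x) - (lap (fun y => Q y * u y) x * c x))
        + ((-(1 / 2 : ℂ)) * (F x ^ 2 * u x * c x)
        + (1 / 8 : ℂ) * ((Complex.normSq (u x) : ℂ) * u x * c x)))))) :=
      hB2.const_mul _
    have hB0 : Integrable (fun x => F x * u x * c x
        + (ε : ℂ) * ((-(1 / 8 : ℂ)) * (lap (lap u) x * c x)
        + ((1 / 4 : ℂ) * ((F x * lap u x * c x) + (lap (fun y => F y * u y) x * c x))
        + ((Complex.I / 16) * ((Q x * lap u x * c x) - (lap (fun y => Q y * u y) x * c x))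
        + ((-(1 / 2 : ℂ)) * (F x ^ 2 * u x * c x)
        + (1 / 8 : ℂ) * ((Complex.normSq (u x) : ℂ) * u x * c x)))))) :=
      ig2.add hB1
    rw [hfun]
    rw [integral_add (ig1.const_mul (-(1 / 2 : ℂ))) hB0]
    rw [integral_add ig2 hB1]
    rw [integral_const_mul (ε : ℂ)]
    rw [integral_add (ig3.const_mul (-(1 / 8 : ℂ))) hB3]
    rw [integral_add (hA4.const_mul ((1 / 4 : ℂ))) hB4]
    rw [integral_add (hA6.const_mul (Complex.I / 16)) hB5]
    rw [integral_add (ig8.const_mul (-(1 / 2 : ℂ))) (ig9.const_mul ((1 / 8 : ℂ)))]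
    rw [integral_const_mul, integral_const_mul, integral_const_mul, integral_const_mul,
      integral_const_mul, integral_const_mul, integral_add ig4 ig5, integral_sub ig6 ig7]
    rw [← hI1, ← hI2, ← hI3, ← hI4, ← hI5, ← hI6, ← hI7, ← hI8, ← hI9]
    ring
  have hmain : (∫ x : E3, ((-(1 / 2 : ℂ) * lap u x + F x * u x
      + (ε : ℂ) * (-(1 / 8 : ℂ) * lap (lap u) x
        + (1 / 4 : ℂ) * (F x * lap u x + lap (fun y => F y * u y) x)
        + (Complex.I / 16) * (Q x * lap u x - lap (fun y => Q y * u y) x)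
        - (1 / 2 : ℂ) * F x ^ 2 * u x
        + (1 / 8 : ℂ) * (Complex.normSq (u x) : ℂ) * u x)) * conj (u x))).im = 0 := by
    rw [hsplit]
    apply Complex.conj_eq_iff_im.mp
    simp only [map_add, map_sub, map_mul, map_neg, map_div₀, map_one, map_ofNat,
      Complex.conj_I, Complex.conj_ofReal, hconj1, hconj2, hconj3, hconj4, hconj5,
      hconj6, hconj7, hconj8, hconj9]
    ring
  have ibig : Integrable (fun x : E3 => ((-(1 / 2 : ℂ) * lap u x + F x * u x
      + (ε : ℂ) * (-(1 / 8 : ℂ) * lap (lap u) x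
        + (1 / 4 : ℂ) * (F x * lap u x + lap (fun y => F y * u y) x)
        + (Complex.I / 16) * (Q x * lap u x - lap (fun y => Q y * u y) x)
        - (1 / 2 : ℂ) * F x ^ 2 * u x
        + (1 / 8 : ℂ) * (Complex.normSq (u x) : ℂ) * u x)) * conj (u x))) := by
    rw [hfun]; exact icomb
  have := Complex.imCLM.integral_comp_comm ibig
  simp only [Complex.imCLM_apply] at this
  rw [this, hmain]

lemma aux_re_im (z v : ℂ) :
    (-Complex.I * z * conj v + v * conj (-Complex.I * z)).re = 2 * (z * conj v).im := by
  simp [Complex.mul_re, Complex.mul_im, Complex.add_re, Complex.conj_re, Complex.conj_im,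
    Complex.neg_re, Complex.neg_im, Complex.I_re, Complex.I_im]
  ring

variable {E : Type*} [NormedAddCommGroup E] [NormedSpace ℝ E]

/-- the ε²-truncated normal-form dynamics conserves the L² norm of the
massive field. -/
theorem second_order_normal_form_L2_conservation
    (ε : ℝ) (hε : 0 < ε)
    (Ψ : ℝ × (Fin 3 → ℝ) → ℂ) (φ pφ : ℝ × (Fin 3 → ℝ) → ℝ)
    (hΨ : ContDiff ℝ (⊤ : ℕ∞) Ψ) (hφ : ContDiff ℝ (⊤ : ℕ∞) φ) (hpφ : ContDiff ℝ (⊤ : ℕ∞) pφ)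
    (K : Set (Fin 3 → ℝ)) (hK : IsCompact K)
    (hsupp : ∀ T : ℝ, ∀ x : Fin 3 → ℝ, x ∉ K → Ψ (T, x) = 0)
    (hSch : ∀ p : ℝ × (Fin 3 → ℝ),
      Complex.I * dTime Ψ p
        = -(1 / 2) * lapl Ψ p + (φ p : ℂ) * Ψ p
          + (ε : ℂ) *
            (-(1 / 8 : ℂ) * lapl (lapl Ψ) p
              + (1 / 4 : ℂ) * ((φ p : ℂ) * lapl Ψ p + lapl (fun q => (φ q : ℂ) * Ψ q) p)
              + (Complex.I / 16) * ((pφ p : ℂ) * lapl Ψ p - lapl (fun q => (pφ q : ℂ) * Ψ q) p)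
              - (1 / 2 : ℂ) * (φ p : ℂ) ^ 2 * Ψ p
              + (1 / 8 : ℂ) * (Complex.normSq (Ψ p) : ℂ) * Ψ p)) :
    ∀ T₁ T₂ : ℝ,
      (∫ x : Fin 3 → ℝ, (Complex.normSq (Ψ (T₁, x)) : ℝ))
        = ∫ x : Fin 3 → ℝ, (Complex.normSq (Ψ (T₂, x)) : ℝ) := by
  have hΨd := hΨ.differentiable (by simp)
  -- dTime as a continuous function
  have hdT : dTime Ψ = fun p => fderiv ℝ Ψ p ((1 : ℝ), (0 : E3)) := by
    funext p
    obtain ⟨t, x⟩ := p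
    have hin : HasDerivAt (fun s : ℝ => (s, x)) ((1 : ℝ), (0 : E3)) t :=
      (hasDerivAt_id t).prodMk (hasDerivAt_const t x)
    exact ((hΨd (t, x)).hasFDerivAt.comp_hasDerivAt t hin).deriv
  have hdT_cont : Continuous (dTime Ψ) := by
    rw [hdT]
    exact (ContinuousLinearMap.apply ℝ ℂ ((1 : ℝ), (0 : E3))).continuous.comp
      (hΨ.continuous_fderiv (by simp))
  -- the pointwise time derivative of |Ψ|²
  have hD_cont : Continuous fun p : ℝ × E3 =>
      (dTime Ψ p * conj (Ψ p) + Ψ p * conj (dTime Ψ p)).re :=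
    Complex.continuous_re.comp
      ((hdT_cont.mul (continuous_conj.comp hΨ.continuous)).add
        (hΨ.continuous.mul (continuous_conj.comp hdT_cont)))
  have hslice : ∀ (t : ℝ) (x : E3), HasDerivAt (fun s => Ψ (s, x)) (dTime Ψ (t, x)) t := by
    intro t x
    have hdiff : DifferentiableAt ℝ (fun s : ℝ => Ψ (s, x)) t :=
      (hΨd (t, x)).comp t (differentiableAt_id.prodMk (differentiableAt_const x))
    exact hdiff.hasDerivAt
  have hDderiv : ∀ (t : ℝ) (x : E3),
      HasDerivAt (fun s => (Complex.normSq (Ψ (s, x)) : ℝ))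
        ((dTime Ψ (t, x) * conj (Ψ (t, x)) + Ψ (t, x) * conj (dTime Ψ (t, x))).re) t := by
    intro t x
    have h1 := hslice t x
    have h2 : HasDerivAt (fun s => conj (Ψ (s, x))) (conj (dTime Ψ (t, x))) t := by
      exact (Complex.conjCLE.toContinuousLinearMap.hasFDerivAt).comp_hasDerivAt t h1
    have h4 := Complex.reCLM.hasFDerivAt.comp_hasDerivAt t (h1.mul h2)
    have heq : (fun s => Complex.reCLM (Ψ (s, x) * conj (Ψ (s, x))))
        = fun s => (Complex.normSq (Ψ (s, x)) : ℝ) := by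
      funext s
      simp [Complex.mul_conj]
    have heq' : (fun s => (Complex.normSq (Ψ (s, x)) : ℝ))
        =ᶠ[nhds t] (⇑Complex.reCLM ∘ fun y => Ψ (y, x) * conj (Ψ (y, x))) :=
      Filter.Eventually.of_forall fun s => by simp [Complex.mul_conj]
    simpa using h4.congr_of_eventuallyEq heq' 
  -- the integral of the pointwise time derivative vanishes
  have hkey : ∀ t : ℝ,
      (∫ x : E3, (dTime Ψ (t, x) * conj (Ψ (t, x))
        + Ψ (t, x) * conj (dTime Ψ (t, x))).re) = 0 := by
    intro t
    set u : E3 → ℂ := fun x => Ψ (t, x) with hu_def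
    set Fc : E3 → ℂ := fun x => ((φ (t, x) : ℝ) : ℂ) with hFc_def
    set Qc : E3 → ℂ := fun x => ((pφ (t, x) : ℝ) : ℂ) with hQc_def
    have hu : ContDiff ℝ (⊤ : ℕ∞) u := hΨ.comp (contDiff_const.prodMk contDiff_id)
    have hFcd : ContDiff ℝ (⊤ : ℕ∞) Fc :=
      Complex.ofRealCLM.contDiff.comp (hφ.comp (contDiff_const.prodMk contDiff_id))
    have hQcd : ContDiff ℝ (⊤ : ℕ∞) Qc :=
      Complex.ofRealCLM.contDiff.comp (hpφ.comp (contDiff_const.prodMk contDiff_id))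
    have hu0 : ∀ x ∉ K, u x = 0 := fun x hx => hsupp t x hx
    have hFr : ∀ x, conj (Fc x) = Fc x := fun x => Complex.conj_ofReal _
    have hQr : ∀ x, conj (Qc x) = Qc x := fun x => Complex.conj_ofReal _
    have hpoint : ∀ x : E3,
        (dTime Ψ (t, x) * conj (Ψ (t, x)) + Ψ (t, x) * conj (dTime Ψ (t, x))).re
          = 2 * ((-(1 / 2 : ℂ) * lap u x + Fc x * u x
            + (ε : ℂ) * (-(1 / 8 : ℂ) * lap (lap u) x
              + (1 / 4 : ℂ) * (Fc x * lap u x + lap (fun y => Fc y * u y) x)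
              + (Complex.I / 16) * (Qc x * lap u x - lap (fun y => Qc y * u y) x)
              - (1 / 2 : ℂ) * Fc x ^ 2 * u x
              + (1 / 8 : ℂ) * (Complex.normSq (u x) : ℂ) * u x)) * conj (u x)).im := by
      intro x
      have h : Complex.I * dTime Ψ (t, x)
          = -(1 / 2 : ℂ) * lap u x + Fc x * u x
            + (ε : ℂ) * (-(1 / 8 : ℂ) * lap (lap u) x
              + (1 / 4 : ℂ) * (Fc x * lap u x + lap (fun y => Fc y * u y) x)
              + (Complex.I / 16) * (Qc x * lap u x - lap (fun y => Qc y * u y) x)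
              - (1 / 2 : ℂ) * Fc x ^ 2 * u x
              + (1 / 8 : ℂ) * (Complex.normSq (u x) : ℂ) * u x) := hSch (t, x)
      have hT : dTime Ψ (t, x)
          = -Complex.I * (-(1 / 2 : ℂ) * lap u x + Fc x * u x
            + (ε : ℂ) * (-(1 / 8 : ℂ) * lap (lap u) x
              + (1 / 4 : ℂ) * (Fc x * lap u x + lap (fun y => Fc y * u y) x)
              + (Complex.I / 16) * (Qc x * lap u x - lap (fun y => Qc y * u y) x)
              - (1 / 2 : ℂ) * Fc x ^ 2 * u x
              + (1 / 8 : ℂ) * (Complex.normSq (u x) : ℂ) * u x)) := by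
        rw [← h, ← mul_assoc, neg_mul, Complex.I_mul_I, neg_neg, one_mul]
      have hP : Ψ (t, x) = u x := rfl
      rw [hP, hT, aux_re_im]
    calc (∫ x : E3, (dTime Ψ (t, x) * conj (Ψ (t, x))
          + Ψ (t, x) * conj (dTime Ψ (t, x))).re)
        = ∫ x : E3, 2 * ((-(1 / 2 : ℂ) * lap u x + Fc x * u x
            + (ε : ℂ) * (-(1 / 8 : ℂ) * lap (lap u) x
              + (1 / 4 : ℂ) * (Fc x * lap u x + lap (fun y => Fc y * u y) x)
              + (Complex.I / 16) * (Qc x * lap u x - lap (fun y => Qc y * u y) x)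
              - (1 / 2 : ℂ) * Fc x ^ 2 * u x
              + (1 / 8 : ℂ) * (Complex.normSq (u x) : ℂ) * u x)) * conj (u x)).im := by
          exact integral_congr_ae (Filter.Eventually.of_forall fun x => hpoint x)
      _ = 2 * ∫ x : E3, ((-(1 / 2 : ℂ) * lap u x + Fc x * u x
            + (ε : ℂ) * (-(1 / 8 : ℂ) * lap (lap u) x
              + (1 / 4 : ℂ) * (Fc x * lap u x + lap (fun y => Fc y * u y) x)
              + (Complex.I / 16) * (Qc x * lap u x - lap (fun y => Qc y * u y) x)
              - (1 / 2 : ℂ) * Fc x ^ 2 * u x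
              + (1 / 8 : ℂ) * (Complex.normSq (u x) : ℂ) * u x)) * conj (u x)).im := by
          exact integral_const_mul 2 _
      _ = 0 := by rw [key_lemma hK ε hu hFcd hQcd hu0 hFr hQr]; ring
  -- derivative of the total mass
  have hN : ∀ t : ℝ,
      HasDerivAt (fun s => ∫ x : E3, (Complex.normSq (Ψ (s, x)) : ℝ)) 0 t := by
    intro t
    obtain ⟨C, hC⟩ := ((isCompact_closedBall t 1).prod hK).exists_bound_of_continuousOn
      hD_cont.continuousOn
    have main := hasDerivAt_integral_of_dominated_loc_of_deriv_le (μ := volume)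
      (F := fun s x => (Complex.normSq (Ψ (s, x)) : ℝ))
      (F' := fun s x => (dTime Ψ (s, x) * conj (Ψ (s, x))
        + Ψ (s, x) * conj (dTime Ψ (s, x))).re)
      (x₀ := t) (bound := K.indicator fun _ => C) (Metric.ball_mem_nhds t one_pos)
      (Filter.Eventually.of_forall fun s =>
        (Complex.continuous_normSq.comp
          (hΨ.continuous.comp (Continuous.prodMk_right s))).aestronglyMeasurable)
      ?_ ?_ ?_ ?_ ?_
    · have := main.2
      rwa [hkey t] at this
    · exact (Complex.continuous_normSq.comp
        (hΨ.continuous.comp (Continuous.prodMk_right t))).integrable_of_hasCompactSupport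
        (HasCompactSupport.intro hK fun x hx => by simp [hsupp t x hx])
    · exact (hD_cont.comp (Continuous.prodMk_right t)).aestronglyMeasurable
    · refine Filter.Eventually.of_forall fun a => fun s hs => ?_
      by_cases ha : a ∈ K
      · rw [Set.indicator_of_mem ha]
        exact hC (s, a) ⟨Metric.ball_subset_closedBall hs, ha⟩
      · rw [Set.indicator_of_notMem ha]
        simp [hsupp s a ha]
    · exact (integrable_indicator_iff hK.measurableSet).2
        (integrableOn_const hK.measure_lt_top.ne)
    · exact Filter.Eventually.of_forall fun a s _ => hDderiv s a
  intro T₁ T₂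
  exact is_const_of_deriv_eq_zero
    (fun s => ((hN s).differentiableAt : DifferentiableAt ℝ _ s)) (fun s => (hN s).deriv) T₁ T₂
end
end
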